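/- arXiv:1402.2558 — 2 statements merged into one kernel-verified Lean document; each statement's English description precedes it below -/
import Mathlib

section
/- Suppose condition (B_p) holds for some p > 1 and condition (Q_∞) holds. Let D_n = max_{τ_n ≤ m ≤ τ_{n+1}} |X_m − X_{τ_n}|. Then for any q ∈ (0,p), sup_x P[D_n ≥ d | X_{τ_n} = x] = O(d^{−q}) as d → ∞, and sup_x E[D_n^q | X_{τ_n} = x] < ∞. -/
open MeasureTheory Filter Topology Asymptotics
open scoped ENNReal NNReal

/-- A time-homogeneous Markov chain on a measurable state space `E`, encoded via the family
`P z` of laws (on trajectory space) of the chain started at `z`.  The field `markov` is the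
time-homogeneous Markov property: conditionally on the event `{ω n = w}` intersected with any
event `B` depending only on the first `n+1` coordinates, the shifted trajectory has law `P w`. -/
structure MChain (E : Type*) [MeasurableSpace E] where
  P : E → MeasureTheory.Measure (ℕ → E)
  isProb : ∀ z, MeasureTheory.IsProbabilityMeasure (P z)
  init : ∀ z, P z {ω | ω 0 = z} = 1
  markov : ∀ (z : E) (n : ℕ) (w : E) (A B : Set (ℕ → E)), MeasurableSet A →
    (∀ ω ω' : ℕ → E, (∀ k, k ≤ n → ω k = ω' k) → ω ∈ B → ω' ∈ B) →
    P z (B ∩ {ω | ω n = w} ∩ {ω | (fun k => ω (n + k)) ∈ A})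
      = P z (B ∩ {ω | ω n = w}) * P w A

namespace MChain

variable {E : Type*} [MeasurableSpace E]

/-- Irreducibility: every state can be reached from every state with positive probability. -/
def Irreducible (X : MChain E) : Prop := ∀ z w : E, ∃ n : ℕ, X.P z {ω | ω n = w} ≠ 0

/-- Recurrence: from every state, the chain returns to it almost surely. -/
def Recurrent (X : MChain E) : Prop := ∀ z : E, X.P z {ω | ∃ n, 1 ≤ n ∧ ω n = z} = 1

def Transient (X : MChain E) : Prop := ¬ X.Recurrent

/-- The first return time to `z` (with junk value `0`, via `sInf ∅ = 0`, if there is no return). -/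
noncomputable def returnTime (z : E) (ω : ℕ → E) : ℕ := sInf {n | 1 ≤ n ∧ ω n = z}

/-- Positive recurrence: recurrent, with finite mean return times. -/
def PositiveRecurrent (X : MChain E) : Prop :=
  X.Recurrent ∧ ∀ z : E, (∫⁻ ω, (returnTime z ω : ℝ≥0∞) ∂(X.P z)) ≠ ⊤

def NullRecurrent (X : MChain E) : Prop := X.Recurrent ∧ ¬ X.PositiveRecurrent

end MChain

section HalfStrip

variable {S : Type*} [Fintype S] [DecidableEq S] [Nonempty S]
  [MeasurableSpace S] [MeasurableSingletonClass S]

/-- `qhat X x i j` is the probability that the `S`-coordinate moves from `i` to `j` when the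
`ℕ`-coordinate is at `x`; this is `q_x(i,j) = Σ_y p(x,i,y,j)` of the paper. -/
noncomputable def qhat (X : MChain (ℕ × S)) (x : ℕ) (i j : S) : ℝ :=
  (X.P (x, i) {ω | (ω 1).2 = j}).toReal

/-- `stepMoment X k x i = μ_k(x,i) = E[(X_{n+1}-X_n)^k | X_n = x, η_n = i]`. -/
noncomputable def stepMoment (X : MChain (ℕ × S)) (k : ℕ) (x : ℕ) (i : S) : ℝ :=
  ∫ ω, (((ω 1).1 : ℝ) - (x : ℝ)) ^ k ∂(X.P (x, i))

/-- Condition (B_p): uniformly bounded conditional `p`-th moments of the jumps of the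
`ℕ`-coordinate (by the Markov property, the conditional moment given `F_n` is a function of
the current state only). -/
def CondB (X : MChain (ℕ × S)) (p : ℝ) : Prop :=
  ∃ C : ℝ≥0∞, C ≠ ⊤ ∧ ∀ (x : ℕ) (i : S),
    (∫⁻ ω, ENNReal.ofReal (|((ω 1).1 : ℝ) - (x : ℝ)| ^ p) ∂(X.P (x, i))) ≤ C

def IsStochasticMatrix (Q : S → S → ℝ) : Prop :=
  (∀ i j, 0 ≤ Q i j) ∧ ∀ i, (∑ j, Q i j) = 1

def IsIrreducibleMatrix (Q : S → S → ℝ) : Prop :=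
  ∀ i j, ∃ n : ℕ, 0 < ((Matrix.of Q) ^ n) i j

/-- Aperiodicity (for a finite irreducible stochastic matrix, eventual positivity of the
diagonal entries of the powers is equivalent to aperiodicity). -/
def IsAperiodicMatrix (Q : S → S → ℝ) : Prop :=
  ∀ i, ∃ N : ℕ, ∀ n, N ≤ n → 0 < ((Matrix.of Q) ^ n) i i

/-- `pst` is a (strictly positive) stationary distribution for `Q`. -/
def IsStationaryDist (Q : S → S → ℝ) (pst : S → ℝ) : Prop :=
  (∀ i, 0 < pst i) ∧ (∑ i, pst i) = 1 ∧ ∀ j, (∑ i, pst i * Q i j) = pst j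

/-- Condition (Q_∞): the transition matrix of the `S`-coordinate converges as `x → ∞` to an
irreducible stochastic matrix `Q`. -/
def CondQ (X : MChain (ℕ × S)) (Q : S → S → ℝ) : Prop :=
  (∀ i j, Tendsto (fun x : ℕ => qhat X x i j) atTop (nhds (Q i j))) ∧
    IsStochasticMatrix Q ∧ IsIrreducibleMatrix Q

/-- Condition (Q_∞^+): as (Q_∞), with a power-law rate of convergence. -/
def CondQplus (X : MChain (ℕ × S)) (Q : S → S → ℝ) : Prop :=
  (∃ δ₀ : ℝ, 0 < δ₀ ∧ ∀ i j,
      (fun x : ℕ => qhat X x i j - Q i j) =O[atTop] fun x : ℕ => (x : ℝ) ^ (-δ₀)) ∧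
    IsStochasticMatrix Q ∧ IsIrreducibleMatrix Q

/-- Condition (M_C): asymptotically constant drifts, `μ₁(x,i) = d_i + o(1)`. -/
def CondMC (X : MChain (ℕ × S)) (d : S → ℝ) : Prop :=
  ∀ i, Tendsto (fun x : ℕ => stepMoment X 1 x i) atTop (nhds (d i))

/-- Condition (M_L): Lamperti-type drifts, `μ₁(x,i) = c_i/x + o(1/x)`, `μ₂(x,i) = s_i² + o(1)`,
with at least one `s_i²` nonzero. -/
def CondML (X : MChain (ℕ × S)) (c s2 : S → ℝ) : Prop :=
  (∀ i, 0 ≤ s2 i) ∧ (∃ i, s2 i ≠ 0) ∧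
    (∀ i, Tendsto (fun x : ℕ => (x : ℝ) * stepMoment X 1 x i) atTop (nhds (c i))) ∧
    (∀ i, Tendsto (fun x : ℕ => stepMoment X 2 x i) atTop (nhds (s2 i)))

/-- Condition (M_L^+): Lamperti-type drifts with power-law error bounds. -/
def CondMLplus (X : MChain (ℕ × S)) (c s2 : S → ℝ) : Prop :=
  (∀ i, 0 ≤ s2 i) ∧ (∃ i, s2 i ≠ 0) ∧
    ∃ δ₁ : ℝ, 0 < δ₁ ∧ ∀ i,
      ((fun x : ℕ => stepMoment X 1 x i - c i / (x : ℝ)) =O[atTop]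
        fun x : ℕ => (x : ℝ) ^ (-1 - δ₁)) ∧
      ((fun x : ℕ => stepMoment X 2 x i - s2 i) =O[atTop] fun x : ℕ => (x : ℝ) ^ (-δ₁))

/-- Successive visit times `τ_0 < τ_1 < ⋯` of the `S`-coordinate to the distinguished state
`s0` (junk value, via `sInf ∅ = 0`, if there is no such visit). -/
noncomputable def tauSeq (s0 : S) (ω : ℕ → ℕ × S) : ℕ → ℕ
  | 0 => sInf {n | (ω n).2 = s0}
  | m + 1 => sInf {n | tauSeq s0 ω m < n ∧ (ω n).2 = s0}

/-- `τ`, the first positive time at which the `S`-coordinate visits `s0`. -/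
noncomputable def tauRet (s0 : S) (ω : ℕ → ℕ × S) : ℕ :=
  sInf {n | 1 ≤ n ∧ (ω n).2 = s0}

/-- `D_n`, the maximal displacement of the `ℕ`-coordinate during the `n`-th excursion. -/
noncomputable def Dexc (s0 : S) (n : ℕ) (ω : ℕ → ℕ × S) : ℕ :=
  Finset.sup (Finset.Icc (tauSeq s0 ω n) (tauSeq s0 ω (n + 1)))
    fun m => Nat.dist (ω m).1 (ω (tauSeq s0 ω n)).1

/-- `N(n) = max {k : τ_k ≤ n}`. -/
noncomputable def Ncount (s0 : S) (n : ℕ) (ω : ℕ → ℕ × S) : ℕ :=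
  sSup {k | tauSeq s0 ω k ≤ n}

end HalfStrip

/-- `Fdist a t` is the distribution function of the square root of a `Gamma(a,t)` random
variable: `F_{a,t}(x) = ∫_0^x 2 u^{2a-1} e^{-u²/t} / (t^a Γ(a)) du`. -/
noncomputable def Fdist (a t x : ℝ) : ℝ :=
  ∫ u in (0:ℝ)..x, 2 * u ^ (2 * a - 1) * Real.exp (-(u ^ 2) / t) / (t ^ a * Real.Gamma a)

variable {S : Type*} [Fintype S] [DecidableEq S] [Nonempty S]
  [MeasurableSpace S] [MeasurableSingletonClass S]

/-!
Let `τ` be the first return of `η` to `s0` and `D` the displacement of `X` before `τ`.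
Irreducibility of the limit matrix `Q` and (Q_∞) give, from every large `x`, a `Q`-path back to
`s0` of positive probability, and (B_p) keeps the `ℕ`-coordinate large along it; irreducibility
of the chain handles the finitely many remaining starting points. So `η` visits `s0` within `N`
steps with probability at least `ε`, uniformly, and `P[τ > L]` decays geometrically in `L`.
If `τ ≤ L` but `D ≥ d`, one of the first `L` jumps exceeds `d / (L + 1)`; by Markov's inequality
and (B_p) this costs `L (L + 1)^p d^{-p}`. Taking `L` of order `log d` gives
`P[D ≥ d] = O(d^{-r})` for every `r < p`. The strong Markov property at `τ_n` makes `D_n`, given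
`X_{τ_n} = x`, distributed as `D` started from `(x, s0)`, and the moment bound follows by summing
the tail over dyadic layers with some `q < r < p`.
-/

attribute [instance] MChain.isProb

section PathSpace

variable {α : Type*}

theorem dependsOn_mem_Iic_iff {B : Set (ℕ → α)} {n : ℕ} :
    DependsOn (· ∈ B) (Set.Iic n) ↔
      ∀ ω ω' : ℕ → α, (∀ k, k ≤ n → ω k = ω' k) → ω ∈ B → ω' ∈ B :=
  ⟨fun h _ _ hk hω => (h fun k hkn => hk k hkn).mp hω,
    fun h _ _ hk => propext ⟨h _ _ hk, h _ _ fun k hkn => (hk k hkn).symm⟩⟩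

variable [MeasurableSpace α]

theorem measurable_shift (n : ℕ) : Measurable fun (ω : ℕ → α) (k : ℕ) => ω (n + k) :=
  measurable_pi_lambda _ fun _ => measurable_pi_apply _

variable [Countable α] [MeasurableSingletonClass α]

theorem measurable_of_dependsOn_Iic {β : Type*} [MeasurableSpace β] [Nonempty β]
    {f : (ℕ → α) → β} {n : ℕ} (hf : DependsOn f (Set.Iic n)) : Measurable f := by
  obtain ⟨g, rfl⟩ := dependsOn_iff_exists_comp.1 hf
  exact (measurable_of_countable g).comp (Set.measurable_restrict _)

theorem measurableSet_of_dependsOn_Iic {B : Set (ℕ → α)} {n : ℕ}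
    (hB : DependsOn (· ∈ B) (Set.Iic n)) : MeasurableSet B :=
  measurable_mem.1 (measurable_of_dependsOn_Iic hB)

theorem measurableSet_eval_eq (n : ℕ) (w : α) : MeasurableSet {ω : ℕ → α | ω n = w} :=
  measurableSet_eq_fun (measurable_pi_apply n) measurable_const

end PathSpace

theorem measurable_nat_sInf_setOf {Ω : Type*} [MeasurableSpace Ω] {p : Ω → ℕ → Prop}
    (hp : ∀ k, MeasurableSet {ω | p ω k}) : Measurable fun ω => sInf {k | p ω k} := by
  refine measurable_to_countable' fun m => ?_
  have : (fun ω => sInf {k | p ω k}) ⁻¹' {m} =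
      ({ω | p ω m} ∩ ⋂ k ∈ Set.Iio m, {ω | p ω k}ᶜ) ∪ ({_ω | m = 0} ∩ ⋂ k, {ω | p ω k}ᶜ) := by
    ext ω
    simp only [Set.mem_preimage, Set.mem_singleton_iff, Set.mem_union, Set.mem_inter_iff,
      Set.mem_iInter, Set.mem_compl_iff, Set.mem_Iio]
    rcases Set.eq_empty_or_nonempty {k | p ω k} with he | hne
    · have hno : ∀ k, ¬ p ω k := fun k hk => he.subset hk
      simp [hno, eq_comm]
    · constructor
      · rintro rfl
        exact Or.inl ⟨Nat.sInf_mem hne, fun k hk => Nat.notMem_of_lt_sInf hk⟩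
      · rintro (⟨hm, hlt⟩ | ⟨-, hno⟩)
        · exact IsLeast.csInf_eq ⟨hm, fun k hk => not_lt.1 fun h => hlt k h hk⟩
        · exact absurd hne.some_mem (hno _)
  rw [this]
  exact ((hp m).inter (.biInter (Set.to_countable _) fun k _ => (hp k).compl)).union
    ((MeasurableSet.const _).inter (.iInter fun k => (hp k).compl))

theorem measure_eq_tsum_inter_preimage_singleton {Ω β : Type*} [MeasurableSpace Ω]
    [Countable β] (μ : Measure Ω) {f : Ω → β} (hf : ∀ b, MeasurableSet (f ⁻¹' {b}))
    (B : Set Ω) : μ B = ∑' b, μ (B ∩ f ⁻¹' {b}) := by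
  have := tsum_measure_preimage_singleton (μ := μ.restrict B) Set.countable_univ
    (fun b _ => hf b)
  simp only [Set.preimage_univ, Measure.restrict_apply_univ,
    Measure.restrict_apply (hf _)] at this
  rw [← this, tsum_univ (f := fun b => μ (f ⁻¹' {b} ∩ B))]
  simp only [Set.inter_comm]

theorem mul_le_mul_of_forall_mem_inter_preimage {Ω β : Type*} [MeasurableSpace Ω]
    (μ : Measure Ω) {B : Set Ω} {e : Ω → β} {f g : β → ℝ≥0∞}
    (h : ∀ ω ∈ B, f (e ω) ≤ g (e ω)) (b : β) :
    μ (B ∩ e ⁻¹' {b}) * f b ≤ μ (B ∩ e ⁻¹' {b}) * g b := by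
  rcases (B ∩ e ⁻¹' {b}).eq_empty_or_nonempty with he | ⟨ω, hωB, rfl⟩
  · simp [he]
  · exact mul_le_mul_right (h ω hωB) _

theorem measurable_apply_of_measurable_index {Ω β : Type*} [MeasurableSpace Ω]
    [MeasurableSpace β] {F : ℕ → Ω → β} (hF : ∀ m, Measurable (F m)) {τ : Ω → ℕ}
    (hτ : Measurable τ) : Measurable fun ω => F (τ ω) ω :=
  (measurable_from_prod_countable_left (f := fun q : Ω × ℕ => F q.2 q.1) hF).comp
    (measurable_id.prodMk hτ)

namespace MChain

variable {α : Type*} [MeasurableSpace α] [Countable α] [MeasurableSingletonClass α]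
  (X : MChain α)

theorem ae_eval_zero (z : α) : ∀ᵐ ω ∂X.P z, ω 0 = z :=
  (prob_compl_eq_zero_iff (measurableSet_eval_eq 0 z)).2 (X.init z)

theorem measure_inter_shift_eq_tsum (z : α) {n : ℕ} {A B : Set (ℕ → α)}
    (hA : MeasurableSet A) (hB : DependsOn (· ∈ B) (Set.Iic n)) :
    X.P z (B ∩ {ω | (fun k => ω (n + k)) ∈ A}) = ∑' w, X.P z (B ∩ {ω | ω n = w}) * X.P w A := by
  rw [measure_eq_tsum_inter_preimage_singleton _ (measurableSet_eval_eq n)]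
  refine tsum_congr fun w => ?_
  rw [← X.markov z n w A B hA (dependsOn_mem_Iic_iff.1 hB), Set.inter_right_comm]
  rfl

theorem measure_inter_shift_le (z : α) {n : ℕ} {A B : Set (ℕ → α)} {c : ℝ≥0∞}
    (hA : MeasurableSet A) (hB : DependsOn (· ∈ B) (Set.Iic n))
    (h : ∀ ω ∈ B, X.P (ω n) A ≤ c) :
    X.P z (B ∩ {ω | (fun k => ω (n + k)) ∈ A}) ≤ X.P z B * c := by
  rw [X.measure_inter_shift_eq_tsum z hA hB,
    measure_eq_tsum_inter_preimage_singleton (X.P z) (measurableSet_eval_eq n) B,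
    ← ENNReal.tsum_mul_right]
  exact ENNReal.tsum_le_tsum (mul_le_mul_of_forall_mem_inter_preimage _ (g := fun _ => c) h)

theorem le_measure_inter_shift (z : α) {n : ℕ} {A B : Set (ℕ → α)} {c : ℝ≥0∞}
    (hA : MeasurableSet A) (hB : DependsOn (· ∈ B) (Set.Iic n))
    (h : ∀ ω ∈ B, c ≤ X.P (ω n) A) :
    X.P z B * c ≤ X.P z (B ∩ {ω | (fun k => ω (n + k)) ∈ A}) := by
  rw [X.measure_inter_shift_eq_tsum z hA hB,
    measure_eq_tsum_inter_preimage_singleton (X.P z) (measurableSet_eval_eq n) B,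
    ← ENNReal.tsum_mul_right]
  exact ENNReal.tsum_le_tsum (mul_le_mul_of_forall_mem_inter_preimage _ (f := fun _ => c) h)

end MChain

theorem Finset.exists_pos_forall_le_of_monotone {ι : Type*} (s : Finset ι)
    {g : ι → ℕ → ℝ≥0∞} (hg : ∀ i, Monotone (g i)) (h : ∀ i ∈ s, ∃ N, 0 < g i N) :
    ∃ N b, 0 < b ∧ ∀ i ∈ s, b ≤ g i N := by
  classical
  induction s using Finset.induction_on with
  | empty => exact ⟨0, 1, one_pos, by simp⟩
  | insert a s _ ih =>
    obtain ⟨N, b, hb, hN⟩ := ih fun i hi => h i (Finset.mem_insert_of_mem hi)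
    obtain ⟨Na, hNa⟩ := h a (Finset.mem_insert_self a s)
    refine ⟨max N Na, min b (g a Na), lt_min hb hNa, (Finset.forall_mem_insert _ _ _).2
      ⟨(min_le_right _ _).trans (hg a (le_max_right _ _)),
        fun i hi => (min_le_left _ _).trans ((hN i hi).trans (hg i (le_max_left _ _)))⟩⟩

section StochasticMatrix

variable {S : Type*} [Fintype S] [DecidableEq S] {Q : S → S → ℝ}

theorem IsStochasticMatrix.pow_apply_nonneg (hQ : IsStochasticMatrix Q) (n : ℕ) (i j : S) :
    0 ≤ (Matrix.of Q ^ n) i j := by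
  induction n generalizing i j with
  | zero => by_cases hij : i = j <;> simp [hij]
  | succ n ih => exact Finset.sum_nonneg fun k _ => mul_nonneg (ih i k) (hQ.1 k j)

theorem IsStochasticMatrix.exists_pos_of_pow_succ_pos (hQ : IsStochasticMatrix Q) {n : ℕ}
    {i j : S} (h : 0 < (Matrix.of Q ^ (n + 1)) i j) :
    ∃ k, 0 < Q i k ∧ 0 < (Matrix.of Q ^ n) k j := by
  rw [pow_succ', Matrix.mul_apply] at h
  obtain ⟨k, -, hk⟩ := Finset.exists_lt_of_sum_lt (f := fun _ => (0 : ℝ)) (by simpa using h)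
  exact ⟨k, (pos_and_pos_or_neg_and_neg_of_mul_pos hk).resolve_right
    fun h' => (hQ.pow_apply_nonneg n k j).not_gt h'.2⟩

theorem IsIrreducibleMatrix.exists_pow_pos (hirr : IsIrreducibleMatrix Q)
    (hQ : IsStochasticMatrix Q) (i j : S) : ∃ n, 0 < n ∧ 0 < (Matrix.of Q ^ n) i j := by
  obtain ⟨k, -, hk⟩ : ∃ k ∈ Finset.univ, 0 < Q i k :=
    Finset.exists_lt_of_sum_lt (f := fun _ => (0 : ℝ)) (by simp [hQ.2 i])
  obtain ⟨n, hn⟩ := hirr k j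
  refine ⟨n + 1, n.succ_pos, ?_⟩
  rw [pow_succ', Matrix.mul_apply]
  exact (mul_pos hk hn).trans_le (Finset.single_le_sum (f := fun l => Q i l * (Matrix.of Q ^ n) l j)
    (fun l _ => mul_nonneg (hQ.1 i l) (hQ.pow_apply_nonneg n l j)) (Finset.mem_univ k))

end StochasticMatrix

section Jumps

variable {S : Type*} [MeasurableSpace S]

def JumpMomentLE (X : MChain (ℕ × S)) (p : ℝ) (C : ℝ≥0∞) : Prop :=
  ∀ (x : ℕ) (i : S), (∫⁻ ω, ENNReal.ofReal (|((ω 1).1 : ℝ) - (x : ℝ)| ^ p) ∂(X.P (x, i))) ≤ C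

variable {X : MChain (ℕ × S)} {p : ℝ} {C : ℝ≥0∞}

theorem JumpMomentLE.measure_le_abs_jump (hC : JumpMomentLE X p C) (hp : 0 < p) (w : ℕ × S)
    {m : ℝ} (hm : 0 < m) :
    X.P w {ω | m ≤ |((ω 1).1 : ℝ) - w.1|} ≤ C / ENNReal.ofReal (m ^ p) := by
  have hmp : ENNReal.ofReal (m ^ p) ≠ 0 := by positivity
  have hf : Measurable fun ω : ℕ → ℕ × S => ENNReal.ofReal (|((ω 1).1 : ℝ) - w.1| ^ p) :=
    (measurable_of_countable fun y : ℕ => ENNReal.ofReal (|(y : ℝ) - w.1| ^ p)).comp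
      (measurable_pi_apply 1).fst
  calc X.P w {ω | m ≤ |((ω 1).1 : ℝ) - w.1|}
      ≤ X.P w {ω | ENNReal.ofReal (m ^ p) ≤ ENNReal.ofReal (|((ω 1).1 : ℝ) - w.1| ^ p)} :=
        measure_mono fun ω hω => ENNReal.ofReal_le_ofReal (Real.rpow_le_rpow hm.le hω hp.le)
    _ ≤ (∫⁻ ω, ENNReal.ofReal (|((ω 1).1 : ℝ) - w.1| ^ p) ∂X.P w) / ENNReal.ofReal (m ^ p) :=
        meas_ge_le_lintegral_div hf.aemeasurable hmp ENNReal.ofReal_ne_top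
    _ ≤ C / ENNReal.ofReal (m ^ p) := by gcongr; exact hC w.1 w.2

theorem JumpMomentLE.exists_measure_abs_jump_le (hC : JumpMomentLE X p C) (hCtop : C ≠ ⊤)
    (hp : 0 < p) {ε : ℝ≥0∞} (hε : 0 < ε) :
    ∃ M : ℕ, ∀ w, X.P w {ω | (M : ℝ) ≤ |((ω 1).1 : ℝ) - w.1|} ≤ ε := by
  have hlim : Tendsto (fun M : ℕ => C / ENNReal.ofReal ((M : ℝ) ^ p)) atTop (𝓝 0) := by
    simpa using ENNReal.Tendsto.const_div (ENNReal.tendsto_ofReal_atTop.comp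
      ((tendsto_rpow_atTop hp).comp tendsto_natCast_atTop_atTop)) (Or.inr hCtop)
  obtain ⟨M, hMpos, hM⟩ :=
    ((eventually_gt_atTop 0).and (hlim.eventually (gt_mem_nhds hε))).exists
  exact ⟨M, fun w => (hC.measure_le_abs_jump hp w (by exact_mod_cast hMpos)).trans hM.le⟩

theorem JumpMomentLE.eventually_le_measure_step (hC : JumpMomentLE X p C) (hCtop : C ≠ ⊤)
    (hp : 0 < p) {i k : S} {q b : ℝ} (hq : Tendsto (fun x => qhat X x i k) atTop (𝓝 q))
    (hb0 : 0 ≤ b) (hb : b < q) (x₀ : ℕ) :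
    ∀ᶠ x in atTop, ENNReal.ofReal b ≤ X.P (x, i) {ω | (ω 1).2 = k ∧ x₀ ≤ (ω 1).1} := by
  set δ := (q - b) / 2
  have hδ : 0 < δ := by simp only [δ]; linarith
  obtain ⟨M, hM⟩ := hC.exists_measure_abs_jump_le hCtop hp (ENNReal.ofReal_pos.2 hδ)
  filter_upwards [hq.eventually_const_lt (show b + δ < q by simp only [δ]; linarith),
    eventually_ge_atTop (x₀ + M)] with x hx hxM
  have hcover : {ω : ℕ → ℕ × S | (ω 1).2 = k} ⊆
      {ω | (ω 1).2 = k ∧ x₀ ≤ (ω 1).1} ∪ {ω | (M : ℝ) ≤ |((ω 1).1 : ℝ) - x|} := by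
    intro ω hω
    by_cases hx₀ : x₀ ≤ (ω 1).1
    · exact Or.inl ⟨hω, hx₀⟩
    · have : ((ω 1).1 : ℝ) + M ≤ x := by exact_mod_cast (by omega : (ω 1).1 + M ≤ x)
      exact Or.inr (show (M : ℝ) ≤ |((ω 1).1 : ℝ) - x| from le_abs.2 (Or.inr (by linarith)))
  refine ENNReal.le_of_add_le_add_right (a := ENNReal.ofReal δ) ENNReal.ofReal_ne_top ?_
  calc ENNReal.ofReal b + ENNReal.ofReal δ = ENNReal.ofReal (b + δ) :=
        (ENNReal.ofReal_add hb0 hδ.le).symm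
    _ ≤ ENNReal.ofReal (qhat X x i k) := ENNReal.ofReal_le_ofReal hx.le
    _ = X.P (x, i) {ω | (ω 1).2 = k} := ENNReal.ofReal_toReal (measure_ne_top _ _)
    _ ≤ _ := (measure_mono hcover).trans ((measure_union_le _ _).trans (by gcongr; exact hM (x, i)))

variable [Countable S] [MeasurableSingletonClass S]

theorem JumpMomentLE.measure_exists_abs_jump_le (hC : JumpMomentLE X p C) (hp : 0 < p)
    (z : ℕ × S) (L : ℕ) {m : ℝ} (hm : 0 < m) :
    X.P z {ω | ∃ k < L, m ≤ |((ω (k + 1)).1 : ℝ) - (ω k).1|}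
      ≤ L * (C / ENNReal.ofReal (m ^ p)) := by
  set A : Set (ℕ → ℕ × S) := {ω | m ≤ |((ω 1).1 : ℝ) - (ω 0).1|}
  have hA : DependsOn (· ∈ A) (Set.Iic 1) := dependsOn_mem_Iic_iff.2 fun ω ω' h hω => by
    simpa only [A, Set.mem_ofPred_eq, h 0 zero_le_one, h 1 le_rfl] using hω
  have hone : ∀ w, X.P w A ≤ C / ENNReal.ofReal (m ^ p) := fun w =>
    (measure_mono_ae ((X.ae_eval_zero w).mono fun ω h (hω : m ≤ |((ω 1).1 : ℝ) - (ω 0).1|) =>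
      show m ≤ |((ω 1).1 : ℝ) - w.1| by rwa [← h])).trans (hC.measure_le_abs_jump hp w hm)
  have hstep : ∀ k, X.P z {ω | m ≤ |((ω (k + 1)).1 : ℝ) - (ω k).1|}
      ≤ C / ENNReal.ofReal (m ^ p) := fun k => by
    simpa [A, add_comm k 1] using X.measure_inter_shift_le z (n := k) (B := Set.univ)
      (measurableSet_of_dependsOn_Iic hA) (fun _ _ _ => rfl) fun ω _ => hone (ω k)
  calc X.P z {ω | ∃ k < L, m ≤ |((ω (k + 1)).1 : ℝ) - (ω k).1|}
      ≤ X.P z (⋃ k ∈ Finset.range L, {ω | m ≤ |((ω (k + 1)).1 : ℝ) - (ω k).1|}) :=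
        measure_mono fun ω ⟨k, hk, hω⟩ => Set.mem_biUnion (Finset.mem_range.2 hk) hω
    _ ≤ ∑ k ∈ Finset.range L, X.P z {ω | m ≤ |((ω (k + 1)).1 : ℝ) - (ω k).1|} :=
        measure_biUnion_finset_le _ _
    _ ≤ L * (C / ENNReal.ofReal (m ^ p)) := by
        simpa using Finset.sum_le_sum fun k (_ : k ∈ Finset.range L) => hstep k

end Jumps

section HittingTimes

variable {S : Type*} [MeasurableSpace S] [MeasurableSingletonClass S]

theorem measurableSet_eval_snd_eq (k : ℕ) (s0 : S) : MeasurableSet {ω : ℕ → ℕ × S | (ω k).2 = s0} :=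
  (measurable_pi_apply k).snd (measurableSet_singleton s0)

theorem measurable_tauSeq (s0 : S) (n : ℕ) : Measurable fun ω : ℕ → ℕ × S => tauSeq s0 ω n := by
  induction n with
  | zero => exact measurable_nat_sInf_setOf fun k => measurableSet_eval_snd_eq k s0
  | succ n ih => exact measurable_nat_sInf_setOf fun k =>
      (measurableSet_lt ih measurable_const).inter (measurableSet_eval_snd_eq k s0)

theorem measurable_tauRet (s0 : S) : Measurable (tauRet s0 : (ℕ → ℕ × S) → ℕ) :=
  measurable_nat_sInf_setOf fun k => (MeasurableSet.const _).inter (measurableSet_eval_snd_eq k s0)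

end HittingTimes

def noVisitUpTo {S : Type*} (s0 : S) (m : ℕ) : Set (ℕ → ℕ × S) :=
  {ω | ∀ k, 1 ≤ k → k ≤ m → (ω k).2 ≠ s0}

section Visits

variable {S : Type*}

theorem noVisitUpTo_antitone (s0 : S) : Antitone (noVisitUpTo s0) :=
  fun _ _ hmn _ hω k hk1 hkm => hω k hk1 (hkm.trans hmn)

theorem dependsOn_mem_noVisitUpTo (s0 : S) (m : ℕ) :
    DependsOn (· ∈ noVisitUpTo s0 m) (Set.Iic m) :=
  dependsOn_mem_Iic_iff.2 fun _ _ h hω k hk1 hkm => h k hkm ▸ hω k hk1 hkm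

variable [MeasurableSpace S]

theorem MChain.monotone_measure_compl_noVisitUpTo (X : MChain (ℕ × S)) (s0 : S) (z : ℕ × S) :
    Monotone fun N => X.P z (noVisitUpTo s0 N)ᶜ :=
  fun _ _ h => measure_mono (Set.compl_subset_compl.2 (noVisitUpTo_antitone s0 h))

variable [Countable S] [MeasurableSingletonClass S] {X : MChain (ℕ × S)} {p : ℝ} {C : ℝ≥0∞}

theorem measurableSet_noVisitUpTo (s0 : S) (m : ℕ) : MeasurableSet (noVisitUpTo s0 m) :=
  measurableSet_of_dependsOn_Iic (dependsOn_mem_noVisitUpTo s0 m)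

theorem MChain.measure_eval_eq_mul_le_measure_compl_noVisitUpTo (X : MChain (ℕ × S)) (s0 : S)
    (z w : ℕ × S) (n N : ℕ) :
    X.P z {ω | ω n = w} * X.P w (noVisitUpTo s0 N)ᶜ ≤ X.P z (noVisitUpTo s0 (n + N))ᶜ := by
  refine (X.le_measure_inter_shift z (measurableSet_noVisitUpTo s0 N).compl
    (dependsOn_mem_Iic_iff.2 fun ω ω' h (hω : ω n = w) => show ω' n = w from h n le_rfl ▸ hω)
    fun ω hω => (congrArg (X.P · _) hω).ge).trans (measure_mono ?_)
  rintro ω ⟨-, hω⟩ hno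
  refine hω fun k hk1 hkN => hno (n + k) (by omega) (by omega)

variable [Fintype S] [DecidableEq S] {Q : S → S → ℝ}

theorem JumpMomentLE.exists_eventually_le_measure_snd_eq (hC : JumpMomentLE X p C)
    (hCtop : C ≠ ⊤) (hp : 0 < p) (hQ : ∀ i j, Tendsto (fun x => qhat X x i j) atTop (𝓝 (Q i j)))
    (hst : IsStochasticMatrix Q) (n : ℕ) :
    ∀ i j, 0 < (Matrix.of Q ^ n) i j →
      ∃ b : ℝ≥0∞, 0 < b ∧ ∀ᶠ x in atTop, b ≤ X.P (x, i) {ω | (ω n).2 = j} := by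
  induction n with
  | zero =>
    intro i j hij
    obtain rfl : i = j := by_contra fun hne => by simp [Matrix.one_apply_ne hne] at hij
    refine ⟨1, one_pos, .of_forall fun x => ?_⟩
    rw [← X.init (x, i)]
    exact measure_mono fun ω (hω : ω 0 = (x, i)) => by simp [hω]
  | succ n ih =>
    intro i j hij
    obtain ⟨k, hik, hkj⟩ := hst.exists_pos_of_pow_succ_pos hij
    obtain ⟨b, hb, hev⟩ := ih k j hkj
    obtain ⟨x₀, hx₀⟩ := eventually_atTop.1 hev
    set B : Set (ℕ → ℕ × S) := {ω | (ω 1).2 = k ∧ x₀ ≤ (ω 1).1}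
    have hB : DependsOn (· ∈ B) (Set.Iic 1) :=
      dependsOn_mem_Iic_iff.2 fun ω ω' h ⟨h1, h2⟩ => ⟨h 1 le_rfl ▸ h1, h 1 le_rfl ▸ h2⟩
    refine ⟨ENNReal.ofReal (Q i k / 2) * b, ENNReal.mul_pos (by positivity) hb.ne', ?_⟩
    filter_upwards [hC.eventually_le_measure_step hCtop hp (hQ i k) (by positivity)
      (half_lt_self hik) x₀] with x hx
    calc ENNReal.ofReal (Q i k / 2) * b ≤ X.P (x, i) B * b := by gcongr
      _ ≤ X.P (x, i) (B ∩ {ω | (fun t => ω (1 + t)) ∈ {ω' | (ω' n).2 = j}}) :=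
        X.le_measure_inter_shift (x, i)
          (measurableSet_eval_snd_eq n j) hB
          fun ω ⟨hωk, hωx⟩ => by
            rw [show ω 1 = ((ω 1).1, k) from Prod.ext rfl hωk]
            exact hx₀ _ hωx
      _ ≤ X.P (x, i) {ω | (ω (n + 1)).2 = j} :=
        measure_mono fun ω ⟨_, hω⟩ => by simpa [add_comm] using hω

theorem JumpMomentLE.exists_eventually_le_measure_compl_noVisitUpTo (hC : JumpMomentLE X p C)
    (hCtop : C ≠ ⊤) (hp : 0 < p) (hQ : CondQ X Q) (s0 : S) :
    ∃ N, ∃ c > 0, ∀ᶠ x in atTop, ∀ i, c ≤ X.P (x, i) (noVisitUpTo s0 N)ᶜ := by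
  obtain ⟨hconv, hst, hirr⟩ := hQ
  have hpos : ∀ i, ∃ N, 0 < liminf (fun x => X.P (x, i) (noVisitUpTo s0 N)ᶜ) atTop := by
    intro i
    obtain ⟨n, hn, hpow⟩ := hirr.exists_pow_pos hst i s0
    obtain ⟨b, hb, hev⟩ := hC.exists_eventually_le_measure_snd_eq hCtop hp hconv hst n i s0 hpow
    refine ⟨n, hb.trans_le (le_liminf_of_le (by isBoundedDefault) (hev.mono fun x hx => ?_))⟩
    exact hx.trans (measure_mono fun ω hω hno => hno n hn le_rfl hω)
  obtain ⟨N, b, hb, hN⟩ := Finset.univ.exists_pos_forall_le_of_monotone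
    (fun i _ _ h => liminf_le_liminf (.of_forall fun x => X.monotone_measure_compl_noVisitUpTo
      s0 (x, i) h)) fun i _ => hpos i
  obtain ⟨c, hc, hcb⟩ := exists_between hb
  exact ⟨N, c, hc, eventually_all.2 fun i =>
    (eventually_lt_of_lt_liminf (hcb.trans_le (hN i (Finset.mem_univ i)))).mono fun _ h => h.le⟩

theorem JumpMomentLE.exists_measure_noVisitUpTo_le (hC : JumpMomentLE X p C) (hCtop : C ≠ ⊤)
    (hp : 0 < p) (hQ : CondQ X Q) (hirr : X.Irreducible) (s0 : S) :
    ∃ N, ∃ ρ < 1, ∀ z, X.P z (noVisitUpTo s0 N) ≤ ρ := by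
  obtain ⟨N₁, c, hc, hev⟩ := hC.exists_eventually_le_measure_compl_noVisitUpTo hCtop hp hQ s0
  obtain ⟨x₀, hx₀⟩ := eventually_atTop.1 hev
  have hreach : ∀ z, ∃ N, 0 < X.P z (noVisitUpTo s0 N)ᶜ := fun z => by
    obtain ⟨n, hn⟩ := hirr z (x₀, s0)
    exact ⟨n + N₁, (ENNReal.mul_pos hn (hc.trans_le (hx₀ x₀ le_rfl s0)).ne').trans_le
      (X.measure_eval_eq_mul_le_measure_compl_noVisitUpTo s0 z _ n N₁)⟩
  obtain ⟨N₂, b, hb, hN₂⟩ := (Finset.range x₀ ×ˢ Finset.univ).exists_pos_forall_le_of_monotone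
    (X.monotone_measure_compl_noVisitUpTo s0) fun z _ => hreach z
  refine ⟨max N₁ N₂, 1 - min b c,
    ENNReal.sub_lt_self ENNReal.one_ne_top one_ne_zero (lt_min hb hc).ne', fun z => ?_⟩
  have hhit : min b c ≤ X.P z (noVisitUpTo s0 (max N₁ N₂))ᶜ := by
    obtain ⟨x, i⟩ := z
    rcases lt_or_ge x x₀ with hx | hx
    · exact (min_le_left _ _).trans ((hN₂ (x, i) (by simp [hx])).trans
        (X.monotone_measure_compl_noVisitUpTo s0 _ (le_max_right _ _)))
    · exact (min_le_right _ _).trans ((hx₀ x hx i).trans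
        (X.monotone_measure_compl_noVisitUpTo s0 _ (le_max_left _ _)))
  calc X.P z (noVisitUpTo s0 (max N₁ N₂)) = 1 - X.P z (noVisitUpTo s0 (max N₁ N₂))ᶜ := by
        rw [prob_compl_eq_one_sub (measurableSet_noVisitUpTo s0 _), ENNReal.sub_sub_cancel
          ENNReal.one_ne_top prob_le_one]
    _ ≤ 1 - min b c := tsub_le_tsub_left hhit 1

end Visits

section Recurrence

variable {S : Type*} [MeasurableSpace S] [Countable S] [MeasurableSingletonClass S]
  {X : MChain (ℕ × S)} {s0 : S} {N : ℕ} {ρ : ℝ≥0∞}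

theorem MChain.measure_noVisitUpTo_mul_le (h : ∀ z, X.P z (noVisitUpTo s0 N) ≤ ρ) (z : ℕ × S)
    (j : ℕ) : X.P z (noVisitUpTo s0 (j * N)) ≤ ρ ^ j := by
  induction j with
  | zero => simpa using prob_le_one
  | succ j ih =>
    calc X.P z (noVisitUpTo s0 ((j + 1) * N))
        ≤ X.P z (noVisitUpTo s0 (j * N) ∩
            {ω | (fun k => ω (j * N + k)) ∈ noVisitUpTo s0 N}) := by
          refine measure_mono fun ω hω => ⟨noVisitUpTo_antitone s0 (by nlinarith) hω, ?_⟩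
          exact fun k hk1 hkN => hω _ (by omega) (by nlinarith)
      _ ≤ X.P z (noVisitUpTo s0 (j * N)) * ρ :=
        X.measure_inter_shift_le z (measurableSet_noVisitUpTo s0 N)
          (dependsOn_mem_noVisitUpTo s0 _) fun ω _ => h _
      _ ≤ ρ ^ (j + 1) := by rw [pow_succ]; gcongr

theorem MChain.ae_infinite_visits (h : ∀ z, X.P z (noVisitUpTo s0 N) ≤ ρ) (hρ : ρ < 1)
    (z : ℕ × S) : ∀ᵐ ω ∂X.P z, {k | (ω k).2 = s0}.Infinite := by
  simp_rw [← Nat.frequently_atTop_iff_infinite, frequently_atTop]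
  refine ae_all_iff.2 fun m => ae_iff.2 (le_zero_iff.1 (ge_of_tendsto'
    (ENNReal.tendsto_pow_atTop_nhds_zero_of_lt_one hρ) fun j => ?_))
  calc X.P z {ω | ¬∃ k ≥ m, (ω k).2 = s0}
      ≤ X.P z (Set.univ ∩ {ω | (fun k => ω (m + k)) ∈ noVisitUpTo s0 (j * N)}) :=
        measure_mono fun ω hω => ⟨trivial, fun k _ _ hk => hω ⟨m + k, by omega, hk⟩⟩
    _ ≤ X.P z Set.univ * ρ ^ j :=
        X.measure_inter_shift_le z (measurableSet_noVisitUpTo s0 _) (fun _ _ _ => rfl)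
          fun ω _ => X.measure_noVisitUpTo_mul_le h _ j
    _ = ρ ^ j := by simp

end Recurrence

theorem Nat.cast_dist_eq_abs (a b : ℕ) : ((Nat.dist a b : ℕ) : ℝ) = |(a : ℝ) - b| := by
  rcases le_total a b with h | h
  · rw [Nat.dist_eq_sub_of_le h, Nat.cast_sub h, abs_sub_comm, abs_of_nonneg (by simpa)]
  · rw [Nat.dist_eq_sub_of_le_right h, Nat.cast_sub h, abs_of_nonneg (by simpa)]

noncomputable def returnDisplacement {S : Type*} (s0 : S) (ω : ℕ → ℕ × S) : ℕ :=
  (Finset.Icc 0 (tauRet s0 ω)).sup fun k => Nat.dist (ω k).1 (ω 0).1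

section ReturnDisplacement

variable {S : Type*}

theorem returnDisplacement_lt {s0 : S} {ω : ℕ → ℕ × S} {L d : ℕ} (hd : 0 < d)
    (hvisit : ω ∉ noVisitUpTo s0 L)
    (hjump : ∀ k < L, |((ω (k + 1)).1 : ℝ) - (ω k).1| < d / (L + 1)) :
    returnDisplacement s0 ω < d := by
  obtain ⟨t, ht1, htL, ht⟩ : ∃ t, 1 ≤ t ∧ t ≤ L ∧ (ω t).2 = s0 := by
    simpa [noVisitUpTo] using hvisit
  have hτ : tauRet s0 ω ≤ L :=
    (Nat.sInf_le (show t ∈ {n | 1 ≤ n ∧ (ω n).2 = s0} from ⟨ht1, ht⟩)).trans htL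
  refine (Finset.sup_lt_iff (by simpa using hd)).2 fun k hk => ?_
  have hkL : k ≤ L := (Finset.mem_Icc.1 hk).2.trans hτ
  have hsum := dist_le_range_sum_dist (fun t => ((ω t).1 : ℝ)) k
  have hle : ∑ t ∈ Finset.range k, dist ((ω t).1 : ℝ) (ω (t + 1)).1 ≤ k * (d / (L + 1)) :=
    calc _ ≤ ∑ _t ∈ Finset.range k, (d / (L + 1) : ℝ) := Finset.sum_le_sum fun t ht => by
          rw [Real.dist_eq, abs_sub_comm]
          exact (hjump t (by rw [Finset.mem_range] at ht; omega)).le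
      _ = k * (d / (L + 1)) := by simp
  have hk : (k : ℝ) * (d / (L + 1)) < d := by
    rw [mul_div_assoc', div_lt_iff₀ (by positivity)]
    have : (k : ℝ) ≤ L := by exact_mod_cast hkL
    have : (0 : ℝ) < d := by exact_mod_cast hd
    nlinarith
  rw [← Nat.cast_lt (α := ℝ), Nat.cast_dist_eq_abs, ← Real.dist_eq, dist_comm]
  linarith

variable [MeasurableSpace S] [Countable S] [MeasurableSingletonClass S]
  {X : MChain (ℕ × S)} {p : ℝ} {C : ℝ≥0∞}

theorem JumpMomentLE.measure_returnDisplacement_ge_le (hC : JumpMomentLE X p C) (hp : 0 < p)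
    (s0 : S) (z : ℕ × S) (L : ℕ) {d : ℕ} (hd : 0 < d) :
    X.P z {ω | d ≤ returnDisplacement s0 ω} ≤ X.P z (noVisitUpTo s0 L)
      + L * (C / ENNReal.ofReal (((d : ℝ) / (L + 1)) ^ p)) := by
  refine (measure_mono fun ω hω => ?_).trans ((measure_union_le _ _).trans
    (add_le_add le_rfl (hC.measure_exists_abs_jump_le hp z L (by positivity))))
  by_contra hno
  simp only [Set.mem_union, Set.mem_ofPred_eq, not_or, not_exists, not_and, not_le] at hno
  exact (returnDisplacement_lt hd hno.1 hno.2).not_ge hω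

end ReturnDisplacement

theorem exists_log_add_one_le_mul_rpow {δ : ℝ} (hδ : 0 < δ) :
    ∃ c, ∀ d : ℕ, 1 ≤ d → (Nat.log 2 d : ℝ) + 1 ≤ c * (d : ℝ) ^ δ := by
  have hlog2 : 0 < Real.log 2 := Real.log_pos one_lt_two
  refine ⟨1 / (δ * Real.log 2) + 1, fun d hd => ?_⟩
  have hd1 : (1 : ℝ) ≤ d := by exact_mod_cast hd
  have hlog : (Nat.log 2 d : ℝ) * Real.log 2 ≤ (d : ℝ) ^ δ / δ :=
    calc (Nat.log 2 d : ℝ) * Real.log 2 = Real.log ((2 : ℝ) ^ Nat.log 2 d) := by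
          rw [Real.log_pow]
      _ ≤ Real.log d := Real.log_le_log (by positivity)
          (by exact_mod_cast Nat.pow_log_le_self 2 (by omega))
      _ ≤ (d : ℝ) ^ δ / δ := Real.log_le_rpow_div (by positivity) hδ
  have h : (Nat.log 2 d : ℝ) ≤ 1 / (δ * Real.log 2) * (d : ℝ) ^ δ := by
    calc _ ≤ (d : ℝ) ^ δ / δ / Real.log 2 := (le_div_iff₀ hlog2).2 hlog
      _ = _ := by field_simp
  nlinarith [Real.one_le_rpow hd1 hδ.le]

theorem inv_two_pow_pow_log_le_rpow_neg {r : ℝ} {m : ℕ} (hrm : r ≤ m) {d : ℕ} (hd : 1 ≤ d) :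
    ((1 / 2 : ℝ) ^ m) ^ (Nat.log 2 d + 1) ≤ (d : ℝ) ^ (-r) := by
  have hd0 : (0 : ℝ) < d := by exact_mod_cast hd
  have h2 : (d : ℝ) ≤ 2 ^ (Nat.log 2 d + 1) := by
    exact_mod_cast (Nat.lt_pow_succ_log_self one_lt_two d).le
  calc ((1 / 2 : ℝ) ^ m) ^ (Nat.log 2 d + 1) = ((2 ^ (Nat.log 2 d + 1))⁻¹) ^ m := by
        rw [← pow_mul, mul_comm, pow_mul, one_div, inv_pow]
    _ ≤ ((d : ℝ)⁻¹) ^ m := by gcongr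
    _ = (d : ℝ) ^ (-(m : ℝ)) := by rw [Real.rpow_neg hd0.le, Real.rpow_natCast, inv_pow]
    _ ≤ (d : ℝ) ^ (-r) := Real.rpow_le_rpow_of_exponent_le (by exact_mod_cast hd) (by linarith)

theorem div_div_rpow_le_mul_rpow_neg {p r : ℝ} (hp : 0 ≤ p) (L : ℕ) {d A : ℝ} (hd : 0 < d)
    (hA : 0 ≤ A) (hL : L + 1 ≤ A * d ^ ((p - r) / (p + 1))) :
    L / (d / (L + 1)) ^ p ≤ A ^ (p + 1) * d ^ (-r) := by
  have hL0 : (0 : ℝ) < L + 1 := by positivity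
  calc (L : ℝ) / (d / (L + 1)) ^ p = L * (L + 1) ^ p * d ^ (-p) := by
        rw [Real.div_rpow hd.le hL0.le, div_div_eq_mul_div, Real.rpow_neg hd.le, div_eq_mul_inv]
    _ ≤ (L + 1) * (L + 1) ^ p * d ^ (-p) := by gcongr; linarith
    _ = (L + 1) ^ (p + 1) * d ^ (-p) := by rw [Real.rpow_add_one hL0.ne', mul_comm (L + 1 : ℝ)]
    _ ≤ (A * d ^ ((p - r) / (p + 1))) ^ (p + 1) * d ^ (-p) := by gcongr
    _ = A ^ (p + 1) * d ^ (-r) := by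
        rw [Real.mul_rpow hA (by positivity), ← Real.rpow_mul hd.le, mul_assoc,
          ← Real.rpow_add hd, div_mul_cancel₀ _ (by linarith : p + 1 ≠ 0)]
        ring_nf

theorem natCast_mul_div_ofReal_rpow_le {p r : ℝ} (hp : 0 ≤ p) {C : ℝ≥0∞} (hC : C ≠ ⊤) (L : ℕ)
    {d A : ℝ} (hd : 0 < d) (hA : 0 ≤ A) (hL : L + 1 ≤ A * d ^ ((p - r) / (p + 1))) :
    (L : ℝ≥0∞) * (C / ENNReal.ofReal ((d / (L + 1)) ^ p))
      ≤ ENNReal.ofReal (C.toReal * A ^ (p + 1) * d ^ (-r)) := by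
  conv_lhs => rw [← ENNReal.ofReal_toReal hC, ← ENNReal.ofReal_div_of_pos (by positivity),
    ← ENNReal.ofReal_natCast, ← ENNReal.ofReal_mul (by positivity)]
  refine ENNReal.ofReal_le_ofReal ?_
  calc (L : ℝ) * (C.toReal / (d / (L + 1)) ^ p) = C.toReal * (L / (d / (L + 1)) ^ p) := by ring
    _ ≤ C.toReal * A ^ (p + 1) * d ^ (-r) := by
        rw [mul_assoc]; gcongr; exact div_div_rpow_le_mul_rpow_neg hp L hd hA hL

theorem two_pow_succ_rpow_mul_rpow_neg (c q r : ℝ) (k : ℕ) :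
    ((2 : ℝ) ^ (k + 1)) ^ q * (c * ((2 : ℝ) ^ k) ^ (-r)) = c * 2 ^ q * (2 ^ (q - r)) ^ k := by
  rw [← Real.rpow_natCast, ← Real.rpow_natCast, ← Real.rpow_natCast, ← Real.rpow_mul
    zero_le_two, ← Real.rpow_mul zero_le_two, ← Real.rpow_mul zero_le_two, mul_left_comm,
    mul_assoc, ← Real.rpow_add two_pos, ← Real.rpow_add two_pos]
  push_cast
  ring_nf

section ReturnDisplacementTail

variable {S : Type*} [MeasurableSpace S] [Countable S] [MeasurableSingletonClass S]
  {X : MChain (ℕ × S)} {p : ℝ} {C : ℝ≥0∞} {s0 : S} {N : ℕ} {ρ : ℝ≥0∞}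

theorem JumpMomentLE.exists_measure_returnDisplacement_ge_le (hC : JumpMomentLE X p C)
    (hCtop : C ≠ ⊤) (hp : 0 < p) (hN : ∀ z, X.P z (noVisitUpTo s0 N) ≤ ρ) (hρ : ρ < 1)
    {r : ℝ} (hrp : r < p) :
    ∃ Cr : ℝ, ∀ z (d : ℕ), 1 ≤ d →
      X.P z {ω | d ≤ returnDisplacement s0 ω} ≤ ENNReal.ofReal (Cr * (d : ℝ) ^ (-r)) := by
  obtain ⟨K, hK⟩ : ∃ K, ρ ^ K ≤ ENNReal.ofReal ((1 / 2) ^ ⌈r⌉₊) :=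
    ((ENNReal.tendsto_pow_atTop_nhds_zero_of_lt_one hρ).eventually
      (ge_mem_nhds (by positivity))).exists
  have hδ : 0 < (p - r) / (p + 1) := div_pos (by linarith) (by linarith)
  obtain ⟨c, hc⟩ := exists_log_add_one_le_mul_rpow hδ
  set A := ((K * N + 1 : ℕ) : ℝ) * c
  have hA : 0 ≤ A :=
    mul_nonneg (by positivity) (by simpa using (hc 1 le_rfl).trans' (by positivity))
  refine ⟨1 + C.toReal * A ^ (p + 1), fun z d hd => ?_⟩
  have hd0 : (0 : ℝ) < d := by exact_mod_cast hd
  set l := Nat.log 2 d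
  set L := K * (l + 1) * N
  have hstay : X.P z (noVisitUpTo s0 L) ≤ ENNReal.ofReal ((d : ℝ) ^ (-r)) :=
    calc X.P z (noVisitUpTo s0 L) ≤ (ρ ^ K) ^ (l + 1) := by
          rw [← pow_mul]; exact X.measure_noVisitUpTo_mul_le hN z _
      _ ≤ ENNReal.ofReal (((1 / 2) ^ ⌈r⌉₊) ^ (l + 1)) := by
          rw [ENNReal.ofReal_pow (by positivity)]; gcongr
      _ ≤ _ := ENNReal.ofReal_le_ofReal
          (inv_two_pow_pow_log_le_rpow_neg (Nat.le_ceil r) hd)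
  have hjump : (L : ℝ≥0∞) * (C / ENNReal.ofReal (((d : ℝ) / (L + 1)) ^ p))
      ≤ ENNReal.ofReal (C.toReal * A ^ (p + 1) * (d : ℝ) ^ (-r)) := by
    have hL : (L : ℝ) + 1 ≤ A * (d : ℝ) ^ ((p - r) / (p + 1)) := by
      calc (L : ℝ) + 1 ≤ (K * N + 1 : ℕ) * ((l : ℝ) + 1) := by
            push_cast [L]; nlinarith [(Nat.cast_nonneg l : (0 : ℝ) ≤ l)]
        _ ≤ (K * N + 1 : ℕ) * (c * (d : ℝ) ^ ((p - r) / (p + 1))) := by gcongr; exact hc d hd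
        _ = A * (d : ℝ) ^ ((p - r) / (p + 1)) := by ring
    exact natCast_mul_div_ofReal_rpow_le hp.le hCtop L hd0 hA hL
  calc X.P z {ω | d ≤ returnDisplacement s0 ω}
      ≤ X.P z (noVisitUpTo s0 L) + L * (C / ENNReal.ofReal (((d : ℝ) / (L + 1)) ^ p)) :=
        hC.measure_returnDisplacement_ge_le hp s0 z L hd
    _ ≤ ENNReal.ofReal ((d : ℝ) ^ (-r)) + ENNReal.ofReal (C.toReal * A ^ (p + 1) * d ^ (-r)) :=
        add_le_add hstay hjump
    _ = ENNReal.ofReal ((1 + C.toReal * A ^ (p + 1)) * (d : ℝ) ^ (-r)) := by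
        rw [← ENNReal.ofReal_add (by positivity) (by positivity)]; ring_nf

end ReturnDisplacementTail

section Excursions

variable {S : Type*} {s0 : S} {ω : ℕ → ℕ × S}

theorem tauSeq_eq_nth (h : {k | (ω k).2 = s0}.Infinite) (n : ℕ) :
    tauSeq s0 ω n = Nat.nth (fun k => (ω k).2 = s0) n := by
  induction n with
  | zero => exact Nat.nth_zero.symm
  | succ n ih =>
    classical
    conv_rhs => rw [← Nat.count_nth_succ_of_infinite h n, Nat.nth_count_eq_sInf, ← ih]
    simp only [tauSeq, Nat.lt_iff_add_one_le, and_comm]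

theorem tauSeq_add_one (h : {k | (ω k).2 = s0}.Infinite) (n : ℕ) :
    tauSeq s0 ω (n + 1) = tauSeq s0 ω n + tauRet s0 (fun k => ω (tauSeq s0 ω n + k)) := by
  have hne : {k | tauSeq s0 ω n < k ∧ (ω k).2 = s0}.Nonempty := by
    obtain ⟨k, hk, hlt⟩ := h.exists_gt (tauSeq s0 ω n)
    exact ⟨k, hlt, hk⟩
  rw [tauSeq, ← Nat.sInf_add (le_csInf hne fun _ hb => hb.1.le), add_comm, tauRet]
  congr 2
  ext j
  simp only [Set.mem_ofPred_eq, add_comm j]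
  constructor <;> rintro ⟨h1, h2⟩ <;> exact ⟨by omega, h2⟩

theorem Dexc_eq_returnDisplacement_shift (h : {k | (ω k).2 = s0}.Infinite) (n : ℕ) :
    Dexc s0 n ω = returnDisplacement s0 (fun k => ω (tauSeq s0 ω n + k)) := by
  have hIcc : Finset.Icc (tauSeq s0 ω n) (tauSeq s0 ω (n + 1)) =
      (Finset.Icc 0 (tauRet s0 fun k => ω (tauSeq s0 ω n + k))).map
        (addLeftEmbedding (tauSeq s0 ω n)) := by
    rw [Finset.map_add_left_Icc, add_zero, tauSeq_add_one h]
  rw [Dexc, returnDisplacement, hIcc, Finset.sup_map]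
  simp [Function.comp_def]

variable [MeasurableSpace S] [Countable S] [MeasurableSingletonClass S]

theorem measurable_sup_Icc_dist (a b : ℕ) :
    Measurable fun ω : ℕ → ℕ × S => (Finset.Icc a b).sup fun k => Nat.dist (ω k).1 (ω a).1 :=
  measurable_of_dependsOn_Iic (n := max a b) fun ω ω' h => Finset.sup_congr rfl fun k hk => by
    rw [h k (le_max_of_le_right (Finset.mem_Icc.1 hk).2), h a (le_max_left a b)]

theorem measurable_Dexc (s0 : S) (n : ℕ) : Measurable (Dexc s0 n : (ℕ → ℕ × S) → ℕ) :=
  measurable_apply_of_measurable_index (fun a => measurable_apply_of_measurable_index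
    (measurable_sup_Icc_dist a) (measurable_tauSeq s0 (n + 1))) (measurable_tauSeq s0 n)

theorem measurable_returnDisplacement (s0 : S) :
    Measurable (returnDisplacement s0 : (ℕ → ℕ × S) → ℕ) :=
  measurable_apply_of_measurable_index (measurable_sup_Icc_dist 0) (measurable_tauRet s0)

end Excursions

open Classical in
noncomputable def nthVisitAt {S : Type*} (s0 : S) (n m : ℕ) : Set (ℕ → ℕ × S) :=
  {ω | (ω m).2 = s0 ∧ Nat.count (fun k => (ω k).2 = s0) m = n}

section StrongMarkov

variable {S : Type*}

theorem dependsOn_mem_nthVisitAt (s0 : S) (n m : ℕ) :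
    DependsOn (· ∈ nthVisitAt s0 n m) (Set.Iic m) := by
  classical
  refine dependsOn_mem_Iic_iff.2 fun ω ω' h ⟨hm, hcount⟩ => ⟨h m le_rfl ▸ hm, ?_⟩
  rw [← hcount, Nat.count_eq_card_filter_range, Nat.count_eq_card_filter_range]
  exact congrArg _ (Finset.filter_congr fun k hk => by rw [h k (Finset.mem_range.1 hk).le])

theorem pairwise_disjoint_nthVisitAt (s0 : S) (n : ℕ) :
    Pairwise (Function.onFun Disjoint (nthVisitAt (S := S) s0 n)) := by
  classical
  intro m m' hmm'
  refine Set.disjoint_left.2 fun ω ⟨hm, hcount⟩ ⟨hm', hcount'⟩ => ?_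
  rcases Nat.lt_or_gt_of_ne hmm' with hlt | hlt
  · exact (Nat.count_strict_mono hm hlt).ne (hcount.trans hcount'.symm)
  · exact (Nat.count_strict_mono hm' hlt).ne (hcount'.trans hcount.symm)

theorem tauSeq_eq_iff_mem_nthVisitAt {s0 : S} {ω : ℕ → ℕ × S}
    (h : {k | (ω k).2 = s0}.Infinite) (n m : ℕ) :
    tauSeq s0 ω n = m ↔ ω ∈ nthVisitAt s0 n m := by
  classical
  rw [tauSeq_eq_nth h]
  constructor
  · rintro rfl
    exact ⟨Nat.nth_mem_of_infinite h n, Nat.count_nth_of_infinite h n⟩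
  · rintro ⟨hm, rfl⟩
    exact Nat.nth_count hm

variable [MeasurableSpace S] [Countable S] [MeasurableSingletonClass S]

theorem MChain.measure_shift_tauSeq_inter_eq (X : MChain (ℕ × S)) (s0 : S) (z : ℕ × S)
    (hvis : ∀ᵐ ω ∂X.P z, {k | (ω k).2 = s0}.Infinite) {A : Set (ℕ → ℕ × S)}
    (hA : MeasurableSet A) (n x : ℕ) :
    X.P z ({ω | (fun k => ω (tauSeq s0 ω n + k)) ∈ A} ∩ {ω | (ω (tauSeq s0 ω n)).1 = x})
      = X.P z {ω | (ω (tauSeq s0 ω n)).1 = x} * X.P (x, s0) A := by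
  set base : ℕ → Set (ℕ → ℕ × S) := fun m => nthVisitAt s0 n m ∩ {ω | ω m = (x, s0)}
  have hbase : ∀ m, MeasurableSet (base m) := fun m =>
    (measurableSet_of_dependsOn_Iic (dependsOn_mem_nthVisitAt s0 n m)).inter
      (measurableSet_eval_eq m _)
  have hdisj : Pairwise (Function.onFun Disjoint base) := fun m m' hmm' =>
    (pairwise_disjoint_nthVisitAt s0 n hmm').mono Set.inter_subset_left Set.inter_subset_left
  have hiff : ∀ ω, {k | (ω k).2 = s0}.Infinite → ∀ m,
      (tauSeq s0 ω n = m ∧ (ω m).1 = x ↔ ω ∈ base m) := by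
    intro ω hω m
    rw [tauSeq_eq_iff_mem_nthVisitAt hω]
    exact ⟨fun ⟨hm, hx⟩ => ⟨hm, Prod.ext hx hm.1⟩, fun ⟨hm, hωm⟩ => ⟨hm, by rw [hωm]⟩⟩
  have hE : {ω | (ω (tauSeq s0 ω n)).1 = x} =ᵐ[X.P z] ⋃ m, base m :=
    eventuallyEq_set.2 <| hvis.mono fun ω hω => by
      simp only [Set.mem_iUnion, ← hiff ω hω, Set.mem_ofPred_eq]
      exact ⟨fun h => ⟨_, rfl, h⟩, fun ⟨m, hm, h⟩ => hm ▸ h⟩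
  have hEA : ({ω | (fun k => ω (tauSeq s0 ω n + k)) ∈ A} ∩ {ω | (ω (tauSeq s0 ω n)).1 = x} :
      Set (ℕ → ℕ × S)) =ᵐ[X.P z] ⋃ m, base m ∩ {ω | (fun k => ω (m + k)) ∈ A} :=
    eventuallyEq_set.2 <| hvis.mono fun ω hω => by
      simp only [Set.mem_iUnion, Set.mem_inter_iff, ← hiff ω hω, Set.mem_ofPred_eq]
      exact ⟨fun ⟨hA, h⟩ => ⟨_, ⟨rfl, h⟩, hA⟩, fun ⟨m, ⟨hm, h⟩, hA⟩ => hm ▸ ⟨hA, h⟩⟩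
  rw [measure_congr hEA, measure_congr hE,
    measure_iUnion (f := fun m => base m ∩ {ω | (fun k => ω (m + k)) ∈ A})
      (hdisj.mono fun _ _ h => h.mono Set.inter_subset_left Set.inter_subset_left)
      fun m => (hbase m).inter (measurable_shift m hA),
    measure_iUnion hdisj hbase, ← ENNReal.tsum_mul_right]
  exact tsum_congr fun m => X.markov z m (x, s0) A (nthVisitAt s0 n m) hA
    (dependsOn_mem_Iic_iff.1 (dependsOn_mem_nthVisitAt s0 n m))

end StrongMarkov

theorem natCast_rpow_le_tsum_indicator {q : ℝ} (hq : 0 < q) (n : ℕ) :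
    (n : ℝ≥0∞) ^ q ≤ ∑' k, {m : ℕ | 2 ^ k ≤ m}.indicator (fun _ => (2 ^ (k + 1) : ℝ≥0∞) ^ q) n := by
  rcases Nat.eq_zero_or_pos n with rfl | hpos
  · simp [ENNReal.zero_rpow_of_pos hq]
  refine le_trans ?_ (ENNReal.le_tsum (Nat.log 2 n))
  rw [Set.indicator_of_mem (show n ∈ {m : ℕ | 2 ^ Nat.log 2 n ≤ m} from
    Nat.pow_log_le_self 2 hpos.ne')]
  gcongr
  exact_mod_cast (Nat.lt_pow_succ_log_self one_lt_two n).le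

theorem exists_lintegral_rpow_le_of_measure_ge_le {Ω : Type*} [MeasurableSpace Ω] {c q r : ℝ}
    (hq : 0 < q) (hqr : q < r) :
    ∃ K : ℝ≥0∞, K ≠ ⊤ ∧ ∀ (μ : Measure Ω) (f : Ω → ℕ), Measurable f →
      (∀ d : ℕ, 1 ≤ d → μ {ω | d ≤ f ω} ≤ ENNReal.ofReal (c * (d : ℝ) ^ (-r)) * μ Set.univ) →
      ∫⁻ ω, (f ω : ℝ≥0∞) ^ q ∂μ ≤ K * μ Set.univ := by
  set ρ : ℝ := 2 ^ (q - r)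
  have hρ : ENNReal.ofReal ρ < 1 :=
    ENNReal.ofReal_lt_one.2 (Real.rpow_lt_one_of_one_lt_of_neg one_lt_two (by linarith))
  refine ⟨ENNReal.ofReal (c * 2 ^ q) * (1 - ENNReal.ofReal ρ)⁻¹, ENNReal.mul_ne_top
    ENNReal.ofReal_ne_top (ENNReal.inv_ne_top.2 (tsub_pos_of_lt hρ).ne'), fun μ f hf htail => ?_⟩
  set g : ℕ → Ω → ℝ≥0∞ := fun k => {ω | 2 ^ k ≤ f ω}.indicator fun _ => (2 ^ (k + 1) : ℝ≥0∞) ^ q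
  have hg : ∀ k, Measurable (g k) := fun k =>
    measurable_const.indicator (measurableSet_le measurable_const hf)
  have hpt : ∀ ω, (f ω : ℝ≥0∞) ^ q ≤ ∑' k, g k ω := fun ω =>
    natCast_rpow_le_tsum_indicator hq (f ω)
  have hlayer : ∀ k, (2 ^ (k + 1) : ℝ≥0∞) ^ q * μ {ω | 2 ^ k ≤ f ω}
      ≤ ENNReal.ofReal (c * 2 ^ q) * ENNReal.ofReal ρ ^ k * μ Set.univ := by
    intro k
    have h := htail (2 ^ k) Nat.one_le_two_pow
    push_cast at h
    calc (2 ^ (k + 1) : ℝ≥0∞) ^ q * μ {ω | 2 ^ k ≤ f ω}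
        ≤ ENNReal.ofReal (((2 : ℝ) ^ (k + 1)) ^ q) * (ENNReal.ofReal (c * ((2 : ℝ) ^ k) ^ (-r))
            * μ Set.univ) := by
          rw [← ENNReal.ofReal_rpow_of_nonneg (by positivity) hq.le, ENNReal.ofReal_pow
            zero_le_two, ENNReal.ofReal_ofNat]
          gcongr
      _ = ENNReal.ofReal (c * 2 ^ q) * ENNReal.ofReal ρ ^ k * μ Set.univ := by
          rw [← mul_assoc, ← ENNReal.ofReal_mul (by positivity),
            two_pow_succ_rpow_mul_rpow_neg, ENNReal.ofReal_mul' (by positivity),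
            ENNReal.ofReal_pow (by positivity)]
  calc ∫⁻ ω, (f ω : ℝ≥0∞) ^ q ∂μ ≤ ∫⁻ ω, ∑' k, g k ω ∂μ := lintegral_mono hpt
    _ = ∑' k, (2 ^ (k + 1) : ℝ≥0∞) ^ q * μ {ω | 2 ^ k ≤ f ω} := by
        rw [lintegral_tsum fun k => (hg k).aemeasurable]
        exact tsum_congr fun k => lintegral_indicator_const (measurableSet_le measurable_const hf) _
    _ ≤ ∑' k, ENNReal.ofReal (c * 2 ^ q) * ENNReal.ofReal ρ ^ k * μ Set.univ :=
        ENNReal.tsum_le_tsum hlayer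
    _ = ENNReal.ofReal (c * 2 ^ q) * (1 - ENNReal.ofReal ρ)⁻¹ * μ Set.univ := by
        rw [ENNReal.tsum_mul_right, ENNReal.tsum_mul_left, ENNReal.tsum_geometric]

theorem MChain.measure_Dexc_ge_inter_eq {S : Type*} [MeasurableSpace S] [Countable S]
    [MeasurableSingletonClass S] (X : MChain (ℕ × S)) (s0 : S) (z : ℕ × S)
    (hvis : ∀ᵐ ω ∂X.P z, {k | (ω k).2 = s0}.Infinite) (n x d : ℕ) :
    X.P z ({ω | d ≤ Dexc s0 n ω} ∩ {ω | (ω (tauSeq s0 ω n)).1 = x})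
      = X.P z {ω | (ω (tauSeq s0 ω n)).1 = x} * X.P (x, s0) {ω | d ≤ returnDisplacement s0 ω} := by
  rw [← X.measure_shift_tauSeq_inter_eq s0 z hvis
    (measurableSet_le measurable_const (measurable_returnDisplacement s0)) n x]
  refine measure_congr (eventuallyEq_set.2 (hvis.mono fun ω hω => ?_))
  simp only [Set.mem_inter_iff, Set.mem_ofPred_eq, Dexc_eq_returnDisplacement_shift hω n]

theorem stmt12_general (X : MChain (ℕ × S)) (hirr : X.Irreducible) (s0 : S)
    (p : ℝ) (hB : CondB X p)
    (Q : S → S → ℝ) (hQ : CondQ X Q)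
    (q : ℝ) (hq0 : 0 < q) (hqp : q < p) :
    (∃ C : ℝ, ∀ (z : ℕ × S) (n x d : ℕ), 1 ≤ d →
      X.P z ({ω | d ≤ Dexc s0 n ω} ∩ {ω | (ω (tauSeq s0 ω n)).1 = x})
        ≤ ENNReal.ofReal (C * (d : ℝ) ^ (-q)) *
            X.P z {ω | (ω (tauSeq s0 ω n)).1 = x}) ∧
    (∃ C : ℝ≥0∞, C ≠ ⊤ ∧ ∀ (z : ℕ × S) (n x : ℕ),
      (∫⁻ ω in {ω | (ω (tauSeq s0 ω n)).1 = x}, ((Dexc s0 n ω : ℝ≥0∞)) ^ q ∂(X.P z))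
        ≤ C * X.P z {ω | (ω (tauSeq s0 ω n)).1 = x}) := by
  obtain ⟨C, hCtop, hC⟩ : ∃ C, C ≠ ⊤ ∧ JumpMomentLE X p C := hB
  have hp : 0 < p := hq0.trans hqp
  obtain ⟨N, ρ, hρ, hN⟩ := hC.exists_measure_noVisitUpTo_le hCtop hp hQ hirr s0
  have htail : ∀ r < p, ∃ Cr : ℝ, ∀ (z : ℕ × S) (n x d : ℕ), 1 ≤ d →
      X.P z ({ω | d ≤ Dexc s0 n ω} ∩ {ω | (ω (tauSeq s0 ω n)).1 = x})
        ≤ ENNReal.ofReal (Cr * (d : ℝ) ^ (-r)) * X.P z {ω | (ω (tauSeq s0 ω n)).1 = x} := by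
    intro r hr
    obtain ⟨Cr, hCr⟩ := hC.exists_measure_returnDisplacement_ge_le hCtop hp hN hρ hr
    refine ⟨Cr, fun z n x d hd => ?_⟩
    rw [X.measure_Dexc_ge_inter_eq s0 z (X.ae_infinite_visits hN hρ z), mul_comm]
    exact mul_le_mul_left (hCr _ d hd) _
  refine ⟨htail q hqp, ?_⟩
  obtain ⟨Cr, hCr⟩ := htail ((q + p) / 2) (by linarith)
  obtain ⟨K, hK, hmoment⟩ :=
    exists_lintegral_rpow_le_of_measure_ge_le (Ω := ℕ → ℕ × S) (c := Cr) hq0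
      (show q < (q + p) / 2 by linarith)
  refine ⟨K, hK, fun z n x => ?_⟩
  simpa using hmoment ((X.P z).restrict _) (Dexc s0 n) (measurable_Dexc s0 n) fun d hd => by
    simpa [Measure.restrict_apply (measurableSet_le measurable_const (measurable_Dexc s0 n))]
      using hCr z n x d hd

/-- Lemma (maximal excursion displacement): under (B_p) for some `p > 1` and (Q_∞), for any
`q ∈ (0,p)`, uniformly in the starting point `x` of the excursion,
`P[D_n ≥ d | X_{τ_n} = x] = O(d^{−q})` and `E[D_n^q | X_{τ_n} = x]` is uniformly bounded. -/
theorem stmt12 (X : MChain (ℕ × S)) (hirr : X.Irreducible) (s0 : S)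
    (p : ℝ) (hp : 1 < p) (hB : CondB X p)
    (Q : S → S → ℝ) (pst : S → ℝ) (hQ : CondQ X Q) (hpst : IsStationaryDist Q pst)
    (q : ℝ) (hq0 : 0 < q) (hqp : q < p) :
    (∃ C : ℝ, ∀ (z : ℕ × S) (n x d : ℕ), 1 ≤ d →
      X.P z ({ω | d ≤ Dexc s0 n ω} ∩ {ω | (ω (tauSeq s0 ω n)).1 = x})
        ≤ ENNReal.ofReal (C * (d : ℝ) ^ (-q)) *
            X.P z {ω | (ω (tauSeq s0 ω n)).1 = x}) ∧
    (∃ C : ℝ≥0∞, C ≠ ⊤ ∧ ∀ (z : ℕ × S) (n x : ℕ),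
      (∫⁻ ω in {ω | (ω (tauSeq s0 ω n)).1 = x}, ((Dexc s0 n ω : ℝ≥0∞)) ^ q ∂(X.P z))
        ≤ C * X.P z {ω | (ω (tauSeq s0 ω n)).1 = x}) :=
  stmt12_general X hirr s0 p hB Q hQ q hq0 hqp
end

section
/- Let (Z_n) be an irreducible time-homogeneous Markov chain on ℤ≥0. If there exists ε > 0 such that sup_z E[|Z_{n+1} − Z_n|^{1+ε} | Z_n = z] < ∞ and liminf_{z→∞} E[Z_{n+1} − Z_n | Z_n = z] > 0, then (Z_n) is transient. -/
/-!
If the chain were recurrent, irreducibility would force it to hit `0`, hence every finite set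
`{0, …, x₁}`, almost surely from every state. On the other hand, for `α = min ε 1 / 2` the
function `f z = (z + 1) ^ (-α)` is superharmonic off such a set: a second-order expansion bounds
`E_z f(Z₁) - f z` by `-α (z + 1) ^ (-α - 1)` times the drift plus
`O((z + 1) ^ (-1 - 2α))` times the `(1 + 2α)`-th moment of the jump, and the drift term wins for
large `z`. The supermartingale `f(Z_n)` then bounds the probability of ever entering
`{0, …, x₁}` from `x₁ + 1` by `f (x₁ + 1) / f x₁ < 1`.
-/


open MeasureTheory Filter Topology Asymptotics
open scoped ENNReal NNReal

namespace MChain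

open Set

variable {E : Type*} [MeasurableSpace E] (X : MChain E)

instance isProbabilityMeasure_P (z : E) : IsProbabilityMeasure (X.P z) := X.isProb z

variable [MeasurableSingletonClass E]

lemma measurableSet_coord_eq (n : ℕ) (w : E) : MeasurableSet {ω : ℕ → E | ω n = w} :=
  (measurableSet_singleton w).preimage (measurable_pi_apply n)

lemma ae_coord_zero_eq (z : E) : ∀ᵐ ω ∂X.P z, ω 0 = z :=
  (mem_ae_iff_prob_eq_one (measurableSet_coord_eq 0 z)).2 (X.init z)

section Countable

variable [Countable E]

lemma lintegral_comp_coord (μ : Measure (ℕ → E)) (F : E → ℝ≥0∞) (n : ℕ) :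
    ∫⁻ ω, F (ω n) ∂μ = ∑' w, F w * μ {ω | ω n = w} := by
  rw [← lintegral_map (measurable_of_countable F) (measurable_pi_apply n), lintegral_countable']
  simp_rw [Measure.map_apply (measurable_pi_apply n) (measurableSet_singleton _)]
  rfl

lemma measure_shift_mem (z : E) (n : ℕ) {A : Set (ℕ → E)} (hA : MeasurableSet A) :
    X.P z {ω | (fun k => ω (n + k)) ∈ A} = ∫⁻ ω, X.P (ω n) A ∂X.P z := by
  calc X.P z {ω | (fun k => ω (n + k)) ∈ A}
      = ∫⁻ _, 1 ∂(X.P z).restrict {ω | (fun k => ω (n + k)) ∈ A} := by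
        rw [lintegral_one, Measure.restrict_apply_univ]
    _ = ∑' w, X.P z ({ω | ω n = w} ∩ {ω | (fun k => ω (n + k)) ∈ A}) := by
      rw [lintegral_comp_coord _ (fun _ => 1) n]
      simp_rw [one_mul, Measure.restrict_apply (measurableSet_coord_eq n _)]
    _ = ∑' w, X.P w A * X.P z {ω | ω n = w} := by
      refine tsum_congr fun w => ?_
      rw [mul_comm]
      simpa only [univ_inter] using X.markov z n w A univ hA fun _ _ _ h => h
    _ = ∫⁻ ω, X.P (ω n) A ∂X.P z := (lintegral_comp_coord _ (fun w => X.P w A) n).symm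

lemma exists_step_of_measure_coord_succ_ne_zero {z v : E} {n : ℕ}
    (h : X.P z {ω | ω (n + 1) = v} ≠ 0) :
    ∃ w, X.P z {ω | ω n = w} ≠ 0 ∧ X.P w {ω | ω 1 = v} ≠ 0 := by
  have hCK := X.measure_shift_mem z n (measurableSet_coord_eq 1 v)
  rw [lintegral_comp_coord _ (fun w => X.P w {ω | ω 1 = v})] at hCK
  obtain ⟨w, hw⟩ : ∃ w, X.P w {ω | ω 1 = v} * X.P z {ω | ω n = w} ≠ 0 := by
    by_contra! h0
    exact h (hCK.trans (ENNReal.tsum_eq_zero.2 h0))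
  exact ⟨w, right_ne_zero_of_mul hw, left_ne_zero_of_mul hw⟩

lemma measurableSet_exists_coord_mem (K : Set E) (p : ℕ → Prop) :
    MeasurableSet {ω : ℕ → E | ∃ n, p n ∧ ω n ∈ K} := by
  simp only [ofPred_exists]
  exact .iUnion fun n => .inter (.const _) (measurable_pi_apply n K.to_countable.measurableSet)

lemma measure_hit_eq_one_of_step (hrec : X.Recurrent) {x z w : E}
    (hz : X.P z {ω | ∃ n, ω n = x} = 1) (hzw : X.P z {ω | ω 1 = w} ≠ 0) :
    X.P w {ω | ∃ n, ω n = x} = 1 := by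
  have hmeas : MeasurableSet {ω : ℕ → E | ∃ n, ω n = x} := by
    simpa using measurableSet_exists_coord_mem {x} fun _ => True
  have hret : X.P z {ω | ∃ n, 1 ≤ n ∧ ω n = x} = 1 := by
    rcases eq_or_ne z x with rfl | hzx
    · exact hrec z
    · refine le_antisymm prob_le_one (hz ▸ measure_mono_ae ?_)
      filter_upwards [X.ae_coord_zero_eq z] with ω hω ⟨n, hn⟩
      refine ⟨n, Nat.one_le_iff_ne_zero.2 ?_, hn⟩
      rintro rfl
      exact hzx (hω ▸ hn)
  have hint : ∫⁻ ω, X.P (ω 1) {ω | ∃ n, ω n = x} ∂X.P z = ∫⁻ _, 1 ∂X.P z := by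
    rw [lintegral_one, measure_univ, ← hret, ← X.measure_shift_mem z 1 hmeas]
    congr 1
    ext ω
    constructor
    · rintro ⟨n, hn⟩
      exact ⟨1 + n, by omega, hn⟩
    · rintro ⟨n, hn1, hn⟩
      exact ⟨n - 1, by simpa only [Nat.add_sub_cancel' hn1]⟩
  have hae : ∀ᵐ ω ∂X.P z, X.P (ω 1) {ω | ∃ n, ω n = x} = 1 :=
    ae_eq_of_ae_le_of_lintegral_le (ae_of_all _ fun _ => prob_le_one) (by simp [hint])
      aemeasurable_const hint.ge
  by_contra hw
  exact hzw (measure_mono_null (fun ω (hω : ω 1 = w) h1 => hw (hω ▸ h1)) (ae_iff.1 hae))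

lemma measure_hit_eq_one_of_recurrent (hrec : X.Recurrent) {x w : E} {n : ℕ}
    (h : X.P x {ω | ω n = w} ≠ 0) : X.P w {ω | ∃ m, ω m = x} = 1 := by
  induction n generalizing w with
  | zero =>
    obtain rfl : w = x := by
      by_contra hwx
      exact h (measure_mono_null (fun ω (hω : ω 0 = w) h0 => hwx (hω ▸ h0))
        (ae_iff.1 (X.ae_coord_zero_eq x)))
    exact le_antisymm prob_le_one ((X.init w).ge.trans (measure_mono fun ω hω => ⟨0, hω⟩))
  | succ n ih =>
    obtain ⟨v, hv, hvw⟩ := X.exists_step_of_measure_coord_succ_ne_zero h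
    exact X.measure_hit_eq_one_of_step hrec (ih hv) hvw

section Lyapunov

variable {K : Set E} {g : E → ℝ≥0∞} {c : ℝ≥0∞}

lemma mul_measure_hit_before_le (hK : ∀ w ∈ K, c ≤ g w)
    (hg : ∀ z ∉ K, ∫⁻ ω, g (ω 1) ∂X.P z ≤ g z) (N : ℕ) {z : E} (hz : z ∉ K) :
    c * X.P z {ω | ∃ n ≤ N, ω n ∈ K} ≤ g z := by
  induction N generalizing z with
  | zero =>
    have hnull : X.P z {ω | ∃ n ≤ 0, ω n ∈ K} = 0 := by
      refine measure_mono_null ?_ (ae_iff.1 (X.ae_coord_zero_eq z))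
      rintro ω ⟨n, hn, hnK⟩ hω
      obtain rfl := Nat.le_zero.1 hn
      exact hz (hω ▸ hnK)
    rw [hnull, mul_zero]
    exact zero_le
  | succ N ih =>
    have hF : Measurable fun ω : ℕ → E => X.P (ω 1) {ω | ∃ n ≤ N, ω n ∈ K} :=
      (measurable_of_countable fun w => X.P w _).comp (measurable_pi_apply 1)
    calc c * X.P z {ω | ∃ n ≤ N + 1, ω n ∈ K}
        ≤ c * X.P z {ω | (fun k => ω (1 + k)) ∈ {ω | ∃ n ≤ N, ω n ∈ K}} := by
          refine mul_le_mul_right (measure_mono_ae ?_) c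
          filter_upwards [X.ae_coord_zero_eq z] with ω hω ⟨n, hn, hnK⟩
          have hn1 : 1 ≤ n := Nat.one_le_iff_ne_zero.2 fun hn0 => hz (hω ▸ hn0 ▸ hnK)
          exact ⟨n - 1, by omega, by simpa only [Nat.add_sub_cancel' hn1]⟩
      _ = ∫⁻ ω, c * X.P (ω 1) {ω | ∃ n ≤ N, ω n ∈ K} ∂X.P z := by
          rw [X.measure_shift_mem z 1 (measurableSet_exists_coord_mem K _),
            lintegral_const_mul _ hF]
      _ ≤ ∫⁻ ω, g (ω 1) ∂X.P z := lintegral_mono fun ω => by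
          by_cases hω : ω 1 ∈ K
          · exact (mul_le_of_le_one_right' prob_le_one).trans (hK _ hω)
          · exact ih hω
      _ ≤ g z := hg z hz

lemma mul_measure_hit_le (hK : ∀ w ∈ K, c ≤ g w)
    (hg : ∀ z ∉ K, ∫⁻ ω, g (ω 1) ∂X.P z ≤ g z) {z : E} (hz : z ∉ K) :
    c * X.P z {ω | ∃ n, ω n ∈ K} ≤ g z := by
  have hmono : Monotone fun N => {ω : ℕ → E | ∃ n ≤ N, ω n ∈ K} :=
    fun N M hNM ω ⟨n, hn, hnK⟩ => ⟨n, hn.trans hNM, hnK⟩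
  have hU : {ω : ℕ → E | ∃ n, ω n ∈ K} = ⋃ N, {ω | ∃ n ≤ N, ω n ∈ K} := by
    ext ω
    simp only [mem_ofPred_eq, mem_iUnion]
    exact ⟨fun ⟨n, hn⟩ => ⟨n, n, le_rfl, hn⟩, fun ⟨_, n, _, hn⟩ => ⟨n, hn⟩⟩
  rw [hU, hmono.measure_iUnion, ENNReal.mul_iSup]
  exact iSup_le fun N => X.mul_measure_hit_before_le hK hg N hz

end Lyapunov

end Countable

end MChain

namespace Real

lemma one_sub_mul_le_rpow_neg {q x : ℝ} (hq : 0 ≤ q) (hx : 0 < x) :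
    1 - q * (x - 1) ≤ x ^ (-q) := by
  have hq1 : 0 < 1 + q := by linarith
  -- weighted AM-GM for `x` and `x ^ (-q)` with weights `q / (1 + q)` and `1 / (1 + q)`
  have h := geom_mean_le_arith_mean2_weighted (div_nonneg hq hq1.le)
    (div_nonneg zero_le_one hq1.le) hx.le (rpow_nonneg hx.le (-q)) (by field_simp; ring)
  rw [← rpow_mul hx.le, ← rpow_add hx, show q / (1 + q) + -q * (1 / (1 + q)) = 0 by ring,
    rpow_zero, div_mul_eq_mul_div, div_mul_eq_mul_div, one_mul, ← add_div,
    one_le_div hq1] at h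
  linarith

lemma rpow_neg_sub_mul_le {q a b : ℝ} (hq : 0 ≤ q) (ha : 0 < a) (hb : 0 < b) :
    a ^ (-q) - q * a ^ (-q - 1) * (b - a) ≤ b ^ (-q) := by
  have h := mul_le_mul_of_nonneg_right (one_sub_mul_le_rpow_neg hq (div_pos hb ha))
    (rpow_nonneg ha.le (-q))
  rw [div_rpow hb.le ha.le, div_mul_cancel₀ _ (rpow_pos_of_pos ha _).ne'] at h
  calc a ^ (-q) - q * a ^ (-q - 1) * (b - a) = (1 - q * (b / a - 1)) * a ^ (-q) := by
        rw [rpow_sub ha, rpow_one]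
        field_simp
    _ ≤ b ^ (-q) := h

lemma mul_sub_rpow_neg_le {p a b m : ℝ} (hp : 0 ≤ p) (hm : 0 < m) (hma : m ≤ a)
    (hmb : m ≤ b) : (b - a) * (a ^ (-p) - b ^ (-p)) ≤ p * m ^ (-p - 1) * (b - a) ^ 2 := by
  have key {a b : ℝ} (hma : m ≤ a) (hab : a ≤ b) :
      a ^ (-p) - b ^ (-p) ≤ p * m ^ (-p - 1) * (b - a) := by
    have ha : 0 < a := hm.trans_le hma
    have hpow : a ^ (-p - 1) ≤ m ^ (-p - 1) := rpow_le_rpow_of_nonpos hm hma (by linarith)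
    have := rpow_neg_sub_mul_le hp ha (ha.trans_le hab)
    nlinarith [mul_le_mul_of_nonneg_left hpow (mul_nonneg hp (sub_nonneg.2 hab))]
  rcases le_total a b with hab | hba
  · nlinarith [key hma hab]
  · nlinarith [key hmb hba]

lemma rpow_neg_sub_tangent_le {q a b m : ℝ} (hq : 0 ≤ q) (hm : 0 < m) (hma : m ≤ a)
    (hmb : m ≤ b) : b ^ (-q) - (a ^ (-q) - q * a ^ (-q - 1) * (b - a))
      ≤ q * (q + 1) * m ^ (-q - 2) * (b - a) ^ 2 := by
  have h1 := rpow_neg_sub_mul_le hq (hm.trans_le hmb) (hm.trans_le hma)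
  have h2 := mul_sub_rpow_neg_le (p := q + 1) (by linarith) hm hma hmb
  rw [show -(q + 1) = -q - 1 by ring, show -q - 1 - 1 = -q - 2 by ring] at h2
  nlinarith [mul_le_mul_of_nonneg_left h2 hq]

lemma rpow_le_rpow_add_one {x p q : ℝ} (hx : 0 ≤ x) (hp : 0 ≤ p) (hpq : p ≤ q) :
    x ^ p ≤ x ^ q + 1 := by
  rcases le_total x 1 with h | h
  · linarith [rpow_le_one hx h hp, rpow_nonneg hx q]
  · linarith [rpow_le_rpow_of_exponent_le h hpq]

lemma rpow_neg_le_tangent_add {α ε u v : ℝ} (hα0 : 0 < α) (hα1 : α ≤ 1) (hε0 : 0 < ε)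
    (hε1 : ε ≤ 1) (hu : 2 ≤ u) (hv : 1 ≤ v) :
    v ^ (-α) ≤ u ^ (-α) - α * u ^ (-α - 1) * (v - u) + 8 * (|v - u| / u) ^ (1 + ε) := by
  have hu0 : 0 < u := by linarith
  set r := |v - u| / u with hr
  have hr0 : 0 ≤ r := by positivity
  rcases le_or_gt r (1 / 2) with hsmall | hbig
  · have hvu : |v - u| ≤ u / 2 := by rwa [div_le_iff₀ hu0, one_div_mul_eq_div] at hsmall
    have hm : (1 : ℝ) ≤ u / 2 := by linarith
    have htaylor := rpow_neg_sub_tangent_le hα0.le (by linarith) (by linarith : u / 2 ≤ u)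
      (by linarith [(abs_le.1 hvu).1] : u / 2 ≤ v)
    have hpow : (u / 2) ^ (-α - 2) ≤ ((u / 2) ^ 2)⁻¹ := by
      rw [← rpow_two, ← rpow_neg (by linarith)]
      exact rpow_le_rpow_of_exponent_le hm (by linarith)
    have hsq : ((u / 2) ^ 2)⁻¹ * (v - u) ^ 2 = 4 * r ^ 2 := by
      rw [hr, div_pow (|v - u|), sq_abs]
      field_simp
      ring
    have hr2 : r ^ 2 ≤ r ^ (1 + ε) := by
      rw [← rpow_two]
      exact rpow_le_rpow_of_exponent_ge' hr0 (by linarith) (by linarith) (by linarith)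
    have hremainder : α * (α + 1) * ((u / 2) ^ (-α - 2) * (v - u) ^ 2) ≤ 2 * (4 * r ^ 2) :=
      mul_le_mul (by nlinarith)
        ((mul_le_mul_of_nonneg_right hpow (sq_nonneg (v - u))).trans hsq.le)
        (by positivity) (by norm_num)
    linarith
  · have h1 : v ^ (-α) ≤ 1 := rpow_le_one_of_one_le_of_nonpos hv (by linarith)
    have h2 : α * u ^ (-α - 1) * (v - u) ≤ r := by
      have hpow : u ^ (-α - 1) ≤ u⁻¹ := by
        rw [← rpow_neg_one]
        exact rpow_le_rpow_of_exponent_le (by linarith) (by linarith)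
      calc α * u ^ (-α - 1) * (v - u) ≤ α * u ^ (-α - 1) * |v - u| :=
            mul_le_mul_of_nonneg_left (le_abs_self _) (by positivity)
        _ ≤ 1 * u⁻¹ * |v - u| := by gcongr
        _ = r := by rw [hr, one_mul, inv_mul_eq_div]
    have h3 : 1 + r ≤ 6 * r ^ (1 + ε) := by
      have : (1 / 2 : ℝ) ≤ r ^ ε := calc
        (1 / 2 : ℝ) = (1 / 2) ^ (1 : ℝ) := (rpow_one _).symm
        _ ≤ (1 / 2) ^ ε := rpow_le_rpow_of_exponent_ge (by norm_num) (by norm_num) hε1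
        _ ≤ r ^ ε := rpow_le_rpow (by norm_num) hbig.le hε0.le
      rw [rpow_add (by linarith), rpow_one]
      nlinarith
    linarith [rpow_nonneg hu0.le (-α), rpow_nonneg hr0 (1 + ε)]

end Real

lemma Filter.exists_pos_eventually_le_of_liminf_pos {α : Type*} {f : Filter α} {u : α → ℝ}
    (h : 0 < liminf u f) : ∃ a > 0, ∀ᶠ x in f, a ≤ u x := by
  rw [liminf_eq] at h
  rcases Set.eq_empty_or_nonempty {a | ∀ᶠ x in f, a ≤ u x} with he | hne
  · rw [he, Real.sSup_empty] at h
    exact absurd h (lt_irrefl 0)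
  · obtain ⟨a, ha, ha0⟩ := exists_lt_of_lt_csSup hne h
    exact ⟨a, ha0, ha⟩

section Moments

variable {Ω : Type*} [MeasurableSpace Ω] {μ : Measure Ω}

lemma lintegral_ofReal_rpow_abs_le_add_one [IsProbabilityMeasure μ] (f : Ω → ℝ) {p q : ℝ}
    (hp : 0 ≤ p) (hpq : p ≤ q) :
    ∫⁻ ω, ENNReal.ofReal (|f ω| ^ p) ∂μ
      ≤ ∫⁻ ω, ENNReal.ofReal (|f ω| ^ q) ∂μ + 1 := by
  calc ∫⁻ ω, ENNReal.ofReal (|f ω| ^ p) ∂μ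
      ≤ ∫⁻ ω, (ENNReal.ofReal (|f ω| ^ q) + 1) ∂μ := by
        refine lintegral_mono fun ω => ?_
        rw [← ENNReal.ofReal_one, ← ENNReal.ofReal_add (by positivity) zero_le_one]
        exact ENNReal.ofReal_le_ofReal (Real.rpow_le_rpow_add_one (abs_nonneg _) hp hpq)
    _ = ∫⁻ ω, ENNReal.ofReal (|f ω| ^ q) ∂μ + 1 := by
        rw [lintegral_add_right _ measurable_const, lintegral_const, measure_univ, mul_one]

lemma integrable_rpow_abs_and_integral_le [IsProbabilityMeasure μ] {f : Ω → ℝ}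
    (hf : Measurable f) {p q : ℝ} (hp : 0 ≤ p) (hpq : p ≤ q) {C : ℝ≥0∞} (hC : C ≠ ⊤)
    (h : ∫⁻ ω, ENNReal.ofReal (|f ω| ^ q) ∂μ ≤ C) :
    Integrable (fun ω => |f ω| ^ p) μ ∧ ∫ ω, |f ω| ^ p ∂μ ≤ (C + 1).toReal := by
  have hle := (lintegral_ofReal_rpow_abs_le_add_one f hp hpq).trans (add_le_add h le_rfl)
  have hnonneg : 0 ≤ᵐ[μ] fun ω => |f ω| ^ p := ae_of_all _ fun _ => by positivity
  have hmeas := (hf.abs.pow_const p).aestronglyMeasurable (μ := μ)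
  refine ⟨(lintegral_ofReal_ne_top_iff_integrable hmeas hnonneg).1
    (ne_top_of_le_ne_top (by finiteness) hle), ?_⟩
  rw [integral_eq_lintegral_of_nonneg_ae hnonneg hmeas]
  exact ENNReal.toReal_mono (by finiteness) hle

lemma integrable_of_integrable_rpow_abs [IsFiniteMeasure μ] {f : Ω → ℝ} (hf : Measurable f)
    {p : ℝ} (hp : 1 ≤ p) (h : Integrable (fun ω => |f ω| ^ p) μ) : Integrable f μ :=
  (h.add (integrable_const 1)).mono' hf.aestronglyMeasurable (ae_of_all _ fun ω => by
    simpa using Real.rpow_le_rpow_add_one (abs_nonneg (f ω)) zero_le_one hp)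

lemma integrable_rpow_neg_add_one [IsFiniteMeasure μ] {Y : Ω → ℝ} (hY : Measurable Y)
    (hY0 : ∀ ω, 0 ≤ Y ω) {α : ℝ} (hα : 0 ≤ α) :
    Integrable (fun ω => (Y ω + 1) ^ (-α)) μ := by
  refine (integrable_const 1).mono' ((hY.add_const 1).pow_const _).aestronglyMeasurable
    (ae_of_all _ fun ω => ?_)
  have h1 : 1 ≤ Y ω + 1 := by linarith [hY0 ω]
  rw [Real.norm_of_nonneg (Real.rpow_nonneg (by linarith) _)]
  exact Real.rpow_le_one_of_one_le_of_nonpos h1 (by linarith)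

variable [IsProbabilityMeasure μ] {Y : Ω → ℝ}

lemma integral_rpow_neg_le (hY : Measurable Y) (hY0 : ∀ ω, 0 ≤ Y ω) {x α ε : ℝ}
    (hα0 : 0 < α) (hα1 : α ≤ 1) (hε0 : 0 < ε) (hε1 : ε ≤ 1) (hx : 1 ≤ x)
    (hint : Integrable (fun ω => Y ω - x) μ)
    (hintε : Integrable (fun ω => |Y ω - x| ^ (1 + ε)) μ) :
    ∫ ω, (Y ω + 1) ^ (-α) ∂μ
      ≤ (x + 1) ^ (-α) - α * (x + 1) ^ (-α - 1) * ∫ ω, (Y ω - x) ∂μ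
        + 8 / (x + 1) ^ (1 + ε) * ∫ ω, |Y ω - x| ^ (1 + ε) ∂μ := by
  have hpt (ω : Ω) : (Y ω + 1) ^ (-α)
      ≤ (x + 1) ^ (-α) - α * (x + 1) ^ (-α - 1) * (Y ω - x)
        + 8 / (x + 1) ^ (1 + ε) * |Y ω - x| ^ (1 + ε) := by
    have h := Real.rpow_neg_le_tangent_add hα0 hα1 hε0 hε1 (by linarith : 2 ≤ x + 1)
      (by linarith [hY0 ω] : 1 ≤ Y ω + 1)
    rw [add_sub_add_right_eq_sub, Real.div_rpow (abs_nonneg _) (by positivity)] at h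
    linarith [mul_div_assoc' 8 (|Y ω - x| ^ (1 + ε)) ((x + 1) ^ (1 + ε)),
      div_mul_eq_mul_div 8 ((x + 1) ^ (1 + ε)) (|Y ω - x| ^ (1 + ε))]
  have hint_lin :
      Integrable (fun ω => (x + 1) ^ (-α) - α * (x + 1) ^ (-α - 1) * (Y ω - x)) μ :=
    (integrable_const _).sub (hint.const_mul _)
  have hint_err := hintε.const_mul (8 / (x + 1) ^ (1 + ε))
  refine (integral_mono (integrable_rpow_neg_add_one hY hY0 hα0.le) (hint_lin.add hint_err)
    hpt).trans_eq ?_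
  simp only [Pi.add_apply]
  rw [integral_add hint_lin hint_err, integral_sub (integrable_const _) (hint.const_mul _),
    integral_const, integral_const_mul, integral_const_mul]
  simp

lemma integral_rpow_neg_le_of_drift (hY : Measurable Y) (hY0 : ∀ ω, 0 ≤ Y ω) {x α a M : ℝ}
    (hα0 : 0 < α) (hα1 : α ≤ 1 / 2) (hx : 1 ≤ x)
    (hint : Integrable (fun ω => |Y ω - x| ^ (1 + 2 * α)) μ)
    (hdrift : a ≤ ∫ ω, (Y ω - x) ∂μ) (hmom : ∫ ω, |Y ω - x| ^ (1 + 2 * α) ∂μ ≤ M)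
    (hM : 8 * M * (x + 1) ^ (-α) ≤ α * a) :
    ∫ ω, (Y ω + 1) ^ (-α) ∂μ ≤ (x + 1) ^ (-α) := by
  have hu : 0 < x + 1 := by linarith
  have hstep := integral_rpow_neg_le hY hY0 hα0 (by linarith) (by positivity) (by linarith) hx
    (integrable_of_integrable_rpow_abs (hY.sub_const x) (by linarith) hint) hint
  -- the error term is smaller than the drift term by a factor `(x + 1) ^ (-α)`
  have hsplit : 8 / (x + 1) ^ (1 + 2 * α) = 8 * (x + 1) ^ (-α) * (x + 1) ^ (-α - 1) := by
    rw [mul_assoc, ← Real.rpow_add hu, show -α + (-α - 1) = -(1 + 2 * α) by ring,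
      Real.rpow_neg hu.le, div_eq_mul_inv]
  have hc := Real.rpow_nonneg hu.le (-α - 1)
  have h1 := mul_le_mul_of_nonneg_left hdrift (mul_nonneg hα0.le hc)
  have h2 := mul_le_mul_of_nonneg_left hmom
    (by positivity : 0 ≤ 8 * (x + 1) ^ (-α) * (x + 1) ^ (-α - 1))
  have h3 := mul_le_mul_of_nonneg_right hM hc
  rw [hsplit] at hstep
  linarith

end Moments

lemma MChain.exists_rpow_neg_superharmonic (Z : MChain ℕ)
    (hmom : ∃ ε : ℝ, 0 < ε ∧ ∃ C : ℝ≥0∞, C ≠ ⊤ ∧ ∀ z : ℕ,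
      (∫⁻ ω, ENNReal.ofReal (|(ω 1 : ℝ) - (z : ℝ)| ^ (1 + ε)) ∂(Z.P z)) ≤ C)
    (hdrift : 0 < Filter.atTop.liminf fun z : ℕ =>
      ∫ ω, ((ω 1 : ℝ) - (z : ℝ)) ∂(Z.P z)) :
    ∃ α : ℝ, 0 < α ∧ ∃ x₁ : ℕ, ∀ z, x₁ < z →
      ∫⁻ ω, ENNReal.ofReal (((ω 1 : ℝ) + 1) ^ (-α)) ∂Z.P z
        ≤ ENNReal.ofReal (((z : ℝ) + 1) ^ (-α)) := by
  obtain ⟨ε, hε, C, hC, hmomC⟩ := hmom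
  obtain ⟨a, ha, hdrift⟩ := exists_pos_eventually_le_of_liminf_pos hdrift
  set α := min ε 1 / 2 with hα
  have hα0 : 0 < α := by positivity
  have hY : Measurable fun ω : ℕ → ℕ => (ω 1 : ℝ) :=
    measurable_from_nat.comp (measurable_pi_apply 1)
  have hY0 (ω : ℕ → ℕ) : (0 : ℝ) ≤ ω 1 := Nat.cast_nonneg _
  have hmom' (z : ℕ) := integrable_rpow_abs_and_integral_le (μ := Z.P z) (hY.sub_const (z : ℝ))
    (by positivity) (by linarith [min_le_left ε 1] : 1 + 2 * α ≤ 1 + ε) hC (hmomC z)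
  set M := (C + 1).toReal
  have hsmall : ∀ᶠ z : ℕ in atTop, 8 * M * ((z : ℝ) + 1) ^ (-α) ≤ α * a := by
    have h := ((tendsto_rpow_neg_atTop hα0).comp
      (tendsto_atTop_add_const_right _ 1 tendsto_natCast_atTop_atTop)).const_mul (8 * M)
    rw [mul_zero] at h
    exact h.eventually (ge_mem_nhds (by positivity))
  obtain ⟨x₁, hx₁⟩ := eventually_atTop.1 ((hdrift.and hsmall).and (eventually_ge_atTop 1))
  refine ⟨α, hα0, x₁, fun z hz => ?_⟩
  obtain ⟨⟨hza, hzM⟩, hz1⟩ := hx₁ z hz.le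
  rw [← ofReal_integral_eq_lintegral_ofReal (integrable_rpow_neg_add_one hY hY0 hα0.le)
    (ae_of_all _ fun ω => by positivity)]
  exact ENNReal.ofReal_le_ofReal (integral_rpow_neg_le_of_drift hY hY0 hα0
    (by linarith [min_le_right ε 1]) (by exact_mod_cast hz1) (hmom' z).1 hza (hmom' z).2 hzM)

/-- Transience criterion: an irreducible Markov chain on `ℕ` with uniformly bounded
`(1+ε)`-moments and mean drift eventually bounded away from `0` from below is transient. -/
theorem stmt16 (Z : MChain ℕ) (hirr : Z.Irreducible)
    (hmom : ∃ ε : ℝ, 0 < ε ∧ ∃ C : ℝ≥0∞, C ≠ ⊤ ∧ ∀ z : ℕ,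
      (∫⁻ ω, ENNReal.ofReal (|(ω 1 : ℝ) - (z : ℝ)| ^ (1 + ε)) ∂(Z.P z)) ≤ C)
    (hdrift : 0 < Filter.atTop.liminf fun z : ℕ =>
      ∫ ω, ((ω 1 : ℝ) - (z : ℝ)) ∂(Z.P z)) :
    Z.Transient := by
  intro hrec
  obtain ⟨α, hα, x₁, hsuper⟩ := Z.exists_rpow_neg_superharmonic hmom hdrift
  set g : ℕ → ℝ≥0∞ := fun w => ENNReal.ofReal (((w : ℝ) + 1) ^ (-α))
  have hg : StrictAnti g := fun v w hvw =>
    (ENNReal.ofReal_lt_ofReal_iff (by positivity)).2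
      (Real.rpow_lt_rpow_of_neg (by positivity) (by simpa using hvw) (by linarith))
  obtain ⟨n, hn⟩ := hirr 0 (x₁ + 1)
  have hhit : Z.P (x₁ + 1) {ω | ∃ m, ω m ∈ Set.Iic x₁} = 1 :=
    le_antisymm prob_le_one ((Z.measure_hit_eq_one_of_recurrent hrec hn).ge.trans
      (measure_mono fun ω ⟨m, hm⟩ => ⟨m, by simp [hm]⟩))
  have h := Z.mul_measure_hit_le (K := Set.Iic x₁) (fun w hw => hg.antitone hw)
    (fun z hz => hsuper z (not_le.1 hz)) (show x₁ + 1 ∉ Set.Iic x₁ by simp)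
  rw [hhit, mul_one] at h
  exact (hg (Nat.lt_succ_self x₁)).not_ge h
end
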